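/- arXiv:2404.07646 — 8 statements merged into one kernel-verified Lean document; each statement's English description precedes it below -/
import Mathlib

section
/- Let E ⊆ U be a field extension and O a valuation ring of U with valuation val. For x ∈ U and c ∈ E, the value val(x−c) is the maximum of the set {val(x−d) : d ∈ E} if and only if the residue-value rv(x−c) := (x−c)·(1+m)⁻¹ does not lie in rv(E), where m is the maximal ideal of O. -/
/-! For `e ≠ 0`, `rv (x - c) = rv e` says `v (x - (c + e)) < v e = v (x - c)`, i.e. that
`c + e` approximates `x` strictly better than `c`; conversely a better approximation `d ∈ E`
yields `e = d - c`. -/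

theorem Valuation.map_div_sub_one_lt_one_iff {K Γ₀ : Type*} [Field K]
    [LinearOrderedCommGroupWithZero Γ₀] (v : Valuation K Γ₀) {a e : K} (he : e ≠ 0) :
    v (a / e - 1) < 1 ↔ v (a - e) < v e := by
  have hve : 0 < v e := zero_lt_iff.mpr (v.ne_zero_iff.mpr he)
  rw [div_sub_one he, v.map_div, div_lt_one₀ hve]

/-- Let `E ⊆ U` be a field extension and `v` the valuation of a
valuation ring `O` of `U` (Mathlib's multiplicative convention: the paper's
`val(a) ≤ val(b)` corresponds to `v b ≤ v a`, the maximal ideal is `{u | v u < 1}`,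
and `rv(a) ∈ rv(E)` means `∃ e ∈ E, e ≠ 0 ∧ v (a / e - 1) < 1`).
For `x ∈ U` and `c ∈ E`, `val (x - c)` is the maximum of `val (x - E)`
iff `rv (x - c) ∉ rv E`. -/
theorem stmt0 {U Γ : Type*} [Field U] [LinearOrderedCommGroupWithZero Γ]
    (v : Valuation U Γ) (E : Subfield U) (x c : U) (hc : c ∈ E) :
    (∀ d ∈ E, v (x - c) ≤ v (x - d)) ↔
      ¬ ∃ e ∈ E, e ≠ 0 ∧ v ((x - c) / e - 1) < 1 := by
  constructor
  · rintro hmax ⟨e, heE, he0, hlt⟩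
    rw [v.map_div_sub_one_lt_one_iff he0] at hlt
    have hxc : v (x - c) = v e := v.map_eq_of_sub_lt hlt
    have hle := hmax (c + e) (E.add_mem hc heE)
    rw [hxc, ← sub_sub] at hle
    exact hle.not_gt hlt
  · intro hrv d hd
    by_contra! hlt
    have hdc : v (d - c) = v (x - c) := v.map_eq_of_sub_lt <| by
      rwa [show d - c - (x - c) = -(x - d) by ring, v.map_neg]
    have hdc0 : d - c ≠ 0 :=
      v.ne_zero_iff.mp (hdc ▸ (zero_le.trans_lt hlt).ne')
    refine hrv ⟨d - c, E.sub_mem hd hc, hdc0, ?_⟩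
    rwa [v.map_div_sub_one_lt_one_iff hdc0, hdc, sub_sub_sub_cancel_right]
end

section
/- Let E ⊆ U be a field extension, O a valuation ring of U, and x ∈ U \ E. Then val(x−E) has no maximum if and only if both: (i) val(x−E) ⊆ val(E), and (ii) the residue field of O restricted to E equals the residue field of O restricted to the set of elements xc+d with c ∈ E nonzero and d ∈ E, i.e. res(O ∩ E) = res(O ∩ (xE^{≠0}+E)). -/
/-!
Write `y ≈ e` for `v (y - e) < v y`. The value set `val (x - E)` has no maximum exactly when
every `x - c` (`c ∈ E`) is `≈` some element of `E`; such an element has the same value as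
`x - c`, which gives (i), and since `≈` is preserved by multiplication with nonzero scalars,
every `x c + d = c (x + d / c)` is `≈` some `e ∈ E`, which gives the inclusion
`res (O ∩ (x E^{≠0} + E)) ⊆ res (O ∩ E)`. Dividing `x ≈ e` by `e` gives `s ∈ E^{≠0}` with
`x s - 1` in the maximal ideal, and translating by `E` gives the reverse inclusion.
Conversely, given `c ∈ E`, (i) provides `s ∈ E` with `v s = v (x - c)`, so `(x - c) / s` is a
unit of `O`; by (ii) it is `≈` some element of `E`, and multiplying back by `s` shows
`x - c ≈ e` for some `e ∈ E`.
-/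

namespace Valuation

section Ring

variable {R Γ₀ : Type*} [Ring R] [LinearOrderedCommMonoidWithZero Γ₀] (v : Valuation R Γ₀)

theorem map_eq_of_map_sub_lt {a b : R} (h : v (a - b) < v a) : v b = v a :=
  v.map_eq_of_sub_lt (by rwa [map_sub_swap])

def NoBestApprox (E : Set R) (x : R) : Prop :=
  ∀ c ∈ E, ∃ e ∈ E, v (x - c - e) < v (x - c)

variable {v}

theorem noBestApprox_iff_not_exists_min {S : Type*} [SetLike S R] [AddSubgroupClass S R]
    (E : S) (x : R) :
    v.NoBestApprox E x ↔ ¬ ∃ c ∈ E, ∀ d ∈ E, v (x - c) ≤ v (x - d) := by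
  push Not
  refine forall₂_congr fun c hc => ⟨fun ⟨e, he, hlt⟩ => ⟨c + e, add_mem hc he, ?_⟩,
    fun ⟨d, hd, hlt⟩ => ⟨d - c, sub_mem hd hc, ?_⟩⟩
  · rwa [← sub_sub]
  · rwa [sub_sub, add_sub_cancel]

theorem NoBestApprox.exists_map_eq {E : Set R} {x c : R} (h : v.NoBestApprox E x)
    (hc : c ∈ E) : ∃ e ∈ E, v (x - c) = v e := by
  obtain ⟨e, he, hlt⟩ := h c hc
  exact ⟨e, he, (v.map_eq_of_map_sub_lt hlt).symm⟩

end Ring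

theorem map_mul_sub_mul_lt {K Γ₀ : Type*} [DivisionRing K] [LinearOrderedCommGroupWithZero Γ₀]
    (v : Valuation K Γ₀) {a b s : K} (hs : s ≠ 0) (h : v (a - b) < v a) :
    v (s * a - s * b) < v (s * a) := by
  rw [← mul_sub, map_mul, map_mul]
  exact mul_lt_mul_of_pos_left h (v.pos_iff.mpr hs)

section Field

variable {K Γ₀ : Type*} [Field K] [LinearOrderedCommGroupWithZero Γ₀] {v : Valuation K Γ₀}

theorem NoBestApprox.exists_mul_add_sub_lt {E : Subfield K} {x c d : K}
    (h : v.NoBestApprox E x) (hc : c ∈ E) (hd : d ∈ E) (hc0 : c ≠ 0) :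
    ∃ e ∈ E, v (x * c + d - e) < v (x * c + d) := by
  obtain ⟨e, he, hlt⟩ := h (-d / c) (E.div_mem (E.neg_mem hd) hc)
  have hxcd : x * c + d = c * (x - -d / c) := by field_simp; ring
  exact ⟨c * e, E.mul_mem hc he, hxcd ▸ v.map_mul_sub_mul_lt hc0 hlt⟩

theorem NoBestApprox.exists_mul_sub_one_lt {E : Subfield K} {x : K}
    (h : v.NoBestApprox E x) : ∃ c ∈ E, c ≠ 0 ∧ v (x * c - 1) < 1 := by
  obtain ⟨e, he, hlt⟩ := h 0 E.zero_mem
  rw [sub_zero] at hlt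
  have hx0 : v x ≠ 0 := (zero_le.trans_lt hlt).ne'
  have hve : v e = v x := v.map_eq_of_map_sub_lt hlt
  have he0 : e ≠ 0 := by rw [← v.ne_zero_iff, hve]; exact hx0
  refine ⟨e⁻¹, E.inv_mem he, inv_ne_zero he0, ?_⟩
  have := v.map_mul_sub_mul_lt (inv_ne_zero he0) hlt
  rwa [inv_mul_cancel₀ he0, map_mul, map_inv₀, hve, inv_mul_cancel₀ hx0, mul_comm] at this

theorem noBestApprox_of_exists_map_eq_of_exists_sub_lt_one {E : Subfield K} {x : K}
    (hx : x ∉ E) (hval : ∀ c ∈ E, ∃ e ∈ E, v (x - c) = v e)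
    (hres : ∀ c ∈ E, ∀ d ∈ E, c ≠ 0 → v (x * c + d) ≤ 1 →
      ∃ e ∈ E, v e ≤ 1 ∧ v (x * c + d - e) < 1) :
    v.NoBestApprox E x := by
  intro c hc
  obtain ⟨s, hs, hvs⟩ := hval c hc
  have hxc0 : x - c ≠ 0 := sub_ne_zero.mpr fun hxc => hx (hxc ▸ hc)
  have hs0 : s ≠ 0 := by rw [← v.ne_zero_iff, ← hvs, v.ne_zero_iff]; exact hxc0
  have hunit : v (s⁻¹ * (x - c)) = 1 := by
    rw [map_mul, map_inv₀, hvs, inv_mul_cancel₀ (v.ne_zero_iff.mpr hs0)]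
  have hxcd : x * s⁻¹ + -c * s⁻¹ = s⁻¹ * (x - c) := by ring
  obtain ⟨e, he, -, hlt⟩ := hres s⁻¹ (E.inv_mem hs) (-c * s⁻¹)
    (E.mul_mem (E.neg_mem hc) (E.inv_mem hs)) (inv_ne_zero hs0) (hxcd ▸ hunit.le)
  rw [hxcd, ← hunit] at hlt
  refine ⟨s * e, E.mul_mem hs he, ?_⟩
  simpa only [mul_inv_cancel_left₀ hs0] using v.map_mul_sub_mul_lt hs0 hlt

end Field

end Valuation

/-- Let `E ⊆ U` be a field extension, `v` the valuation of a valuation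
ring `O` of `U` (multiplicative convention: `O = {u | v u ≤ 1}`, maximal ideal
`{u | v u < 1}`; the paper's `val(a) ≤ val(b)` is `v b ≤ v a`), and `x ∈ U \ E`.
Then `val (x - E)` has no maximum iff
(i) `val (x - E) ⊆ val E`, and (ii) `res (O ∩ E) = res (O ∩ (x E^{≠0} + E))`
(stated as mutual inclusion of residues, where two elements of `O` have the same
residue iff their difference lies in the maximal ideal). -/
theorem stmt1 {U Γ : Type*} [Field U] [LinearOrderedCommGroupWithZero Γ]
    (v : Valuation U Γ) (E : Subfield U) (x : U) (hx : x ∉ E) :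
    (¬ ∃ c ∈ E, ∀ d ∈ E, v (x - c) ≤ v (x - d)) ↔
      ((∀ c ∈ E, ∃ e ∈ E, v (x - c) = v e) ∧
        (∀ c ∈ E, ∀ d ∈ E, c ≠ 0 → v (x * c + d) ≤ 1 →
          ∃ e ∈ E, v e ≤ 1 ∧ v (x * c + d - e) < 1) ∧
        (∀ e ∈ E, v e ≤ 1 →
          ∃ c ∈ E, ∃ d ∈ E, c ≠ 0 ∧ v (x * c + d) ≤ 1 ∧ v (x * c + d - e) < 1)) := by
  rw [← Valuation.noBestApprox_iff_not_exists_min]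
  refine ⟨fun h => ⟨fun c hc => h.exists_map_eq hc, ?_, ?_⟩,
    fun ⟨hval, hres, _⟩ =>
      Valuation.noBestApprox_of_exists_map_eq_of_exists_sub_lt_one hx hval hres⟩
  · intro c hc d hd hc0 hle
    obtain ⟨e, he, hlt⟩ := h.exists_mul_add_sub_lt hc hd hc0
    have hve : v e = v (x * c + d) := v.map_eq_of_map_sub_lt hlt
    exact ⟨e, he, hve.trans_le hle, hlt.trans_le hle⟩
  · intro e he hve
    obtain ⟨c, hc, hc0, hlt⟩ := h.exists_mul_sub_one_lt
    have hxcd : x * c + (e - 1) - e = x * c - 1 := by ring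
    refine ⟨c, hc, e - 1, E.sub_mem he E.one_mem, hc0, ?_, hxcd ▸ hlt⟩
    rw [← sub_add_cancel (x * c + (e - 1)) e, hxcd]
    exact v.map_add_le hlt.le hve
end

section
/- Let E ⊆ U be fields and O ⊆ O' two valuation rings of U with E ∩ O = E ∩ O'. For x ∈ U \ E, the set val_O(x−E) has a maximum if and only if val_{O'}(x−E) has a maximum. -/
open Valuation

/-- Comparison of valuations via ring membership. -/
private lemma val_le_iff_div_mem {U : Type*} [Field U] (O : ValuationSubring U)
    {a b : U} (hb : b ≠ 0) : O.valuation a ≤ O.valuation b ↔ a / b ∈ O := by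
  have hb' : (0 : _) < O.valuation b := (Valuation.pos_iff _).mpr hb
  rw [← O.valuation_le_one_iff, map_div₀, div_le_one₀ hb']

private lemma coarsen {U : Type*} [Field U] {O O' : ValuationSubring U}
    (hsub : O ≤ O') {a b : U} (h : O.valuation a ≤ O.valuation b) :
    O'.valuation a ≤ O'.valuation b := by
  rcases eq_or_ne b 0 with rfl | hb
  · simpa using h
  · rw [val_le_iff_div_mem O hb] at h
    exact (val_le_iff_div_mem O' hb).mpr (hsub h)

/-- Let `E ⊆ U` be fields and `O ⊆ O'` two valuation rings of `U` with
`E ∩ O = E ∩ O'`. For `x ∈ U \ E`, `val_O (x - E)` has a maximum iff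
`val_{O'} (x - E)` has a maximum.  (Multiplicative convention: the paper's maximum of
`val` corresponds to a minimum of the Mathlib valuation.) -/
theorem stmt2 {U : Type*} [Field U] (E : Subfield U) (O O' : ValuationSubring U)
    (hsub : O ≤ O') (hE : ∀ e : U, e ∈ E → (e ∈ O ↔ e ∈ O'))
    (x : U) (hx : x ∉ E) :
    (∃ c ∈ E, ∀ d ∈ E, O.valuation (x - c) ≤ O.valuation (x - d)) ↔
      (∃ c ∈ E, ∀ d ∈ E, O'.valuation (x - c) ≤ O'.valuation (x - d)) := by
  -- agreement of the two valuations on E: equal O'-values give equal O-values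
  have transfer : ∀ e ∈ E, ∀ e' ∈ E, e' ≠ 0 →
      O'.valuation e = O'.valuation e' → O.valuation e = O.valuation e' := by
    intro e he e' he' he'0 hval
    have he0 : e ≠ 0 := by
      intro h; subst h
      simp only [Valuation.map_zero] at hval
      exact he'0 ((Valuation.zero_iff _).mp hval.symm)
    have h1 : e / e' ∈ O' := (val_le_iff_div_mem O' he'0).mp hval.le
    have h2 : e' / e ∈ O' := (val_le_iff_div_mem O' he0).mp hval.ge
    have h1' : e / e' ∈ O := (hE _ (E.div_mem he he')).mpr h1
    have h2' : e' / e ∈ O := (hE _ (E.div_mem he' he)).mpr h2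
    exact le_antisymm ((val_le_iff_div_mem O he'0).mpr h1')
      ((val_le_iff_div_mem O he0).mpr h2')
  constructor
  · rintro ⟨c, hc, hmin⟩
    exact ⟨c, hc, fun d hd => coarsen hsub (hmin d hd)⟩
  · rintro ⟨c, hc, hmin⟩
    by_cases hcmin : ∀ d ∈ E, O.valuation (x - c) ≤ O.valuation (x - d)
    · exact ⟨c, hc, hcmin⟩
    · push_neg at hcmin
      obtain ⟨d₁, hd₁, hlt₁⟩ := hcmin
      refine ⟨d₁, hd₁, fun d₂ hd₂ => ?_⟩
      by_contra hlt₂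
      rw [not_le] at hlt₂
      -- all three O'-values coincide
      have w21 : O'.valuation (x - d₂) ≤ O'.valuation (x - d₁) := coarsen hsub hlt₂.le
      have w1c : O'.valuation (x - d₁) ≤ O'.valuation (x - c) := coarsen hsub hlt₁.le
      have wc1 : O'.valuation (x - c) ≤ O'.valuation (x - d₁) := hmin d₁ hd₁
      have wc2 : O'.valuation (x - c) ≤ O'.valuation (x - d₂) := hmin d₂ hd₂
      have e1 : O'.valuation (x - d₁) = O'.valuation (x - c) := le_antisymm w1c wc1
      have e2 : O'.valuation (x - d₂) = O'.valuation (x - c) :=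
        le_antisymm (w21.trans w1c) wc2
      -- the differences in E
      have hv_e : O.valuation (d₁ - d₂) = O.valuation (x - d₁) := by
        have : O.valuation ((x - d₂) - (x - d₁)) = O.valuation (x - d₁) :=
          Valuation.map_sub_eq_of_lt_right _ hlt₂
        simpa using this
      have hv_e' : O.valuation (c - d₂) = O.valuation (x - c) := by
        have : O.valuation ((x - d₂) - (x - c)) = O.valuation (x - c) :=
          Valuation.map_sub_eq_of_lt_right _ (hlt₂.trans hlt₁)
        simpa using this
      have hw_e : O'.valuation (d₁ - d₂) = O'.valuation (x - d₁) :=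
        le_antisymm (coarsen hsub hv_e.le) (coarsen hsub hv_e.ge)
      have hw_e' : O'.valuation (c - d₂) = O'.valuation (x - c) :=
        le_antisymm (coarsen hsub hv_e'.le) (coarsen hsub hv_e'.ge)
      have hne' : c - d₂ ≠ 0 := by
        intro h
        have : O.valuation (x - c) = 0 := by rw [← hv_e', h, Valuation.map_zero]
        rw [Valuation.zero_iff, sub_eq_zero] at this
        exact hx (this ▸ hc)
      have := transfer (d₁ - d₂) (E.sub_mem hd₁ hd₂) (c - d₂) (E.sub_mem hc hd₂) hne'
        (by rw [hw_e, hw_e', e1])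
      rw [hv_e, hv_e'] at this
      exact absurd this (hlt₁.trans_le (le_of_eq rfl)).ne
end

section
/- Let E ⊆ U be ordered fields, O a convex valuation subring of U, and x ∈ U \ E. If val(x−E) has no maximum, then both val({x−c : c ∈ E, x−c > 0}) and val({x−c : c ∈ E, x−c < 0}) are cofinal in val(x−E). -/
/-!
Pick `d ∈ E` with `val (x - d) > val (x - c)`. By the ultrametric inequality
`t := |c - d| ∈ E` has `val t = val (x - c) < val (x - d)`, and convexity of `O` turns this
into `|x - d| < t`. Hence `x - (d - t)` is positive, `x - (d + t)` is negative, and both have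
the valuation of `t`, i.e. of `x - c`.
-/

section ConvexValuationSubring

variable {U : Type*} [Field U] [LinearOrder U] [IsStrictOrderedRing U] {O : ValuationSubring U}

theorem ValuationSubring.valuation_le_of_abs_le (hO : ∀ b : U, |b| ≤ 1 → b ∈ O) {a b : U}
    (hab : |b| ≤ |a|) : O.valuation b ≤ O.valuation a := by
  rcases eq_or_ne a 0 with rfl | ha
  · rw [abs_zero, abs_nonpos_iff] at hab
    simp [hab]
  have hmem : b / a ∈ O := hO _ <| by rwa [abs_div, div_le_one (abs_pos.mpr ha)]
  calc O.valuation b = O.valuation (b / a) * O.valuation a := by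
        rw [← map_mul, div_mul_cancel₀ b ha]
    _ ≤ 1 * O.valuation a := by gcongr; exact (O.valuation_le_one_iff _).mpr hmem
    _ = O.valuation a := one_mul _

theorem ValuationSubring.abs_lt_abs_of_valuation_lt (hO : ∀ b : U, |b| ≤ 1 → b ∈ O) {a b : U}
    (h : O.valuation a < O.valuation b) : |a| < |b| :=
  lt_of_not_ge fun hba => (valuation_le_of_abs_le hO hba).not_gt h

theorem ValuationSubring.exists_mem_sub_pos_and_sub_neg_of_valuation_lt
    (hO : ∀ b : U, |b| ≤ 1 → b ∈ O) {E : Subfield U} {x c d : U} (hc : c ∈ E) (hd : d ∈ E)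
    (hlt : O.valuation (x - d) < O.valuation (x - c)) :
    (∃ e ∈ E, 0 < x - e ∧ O.valuation (x - e) = O.valuation (x - c)) ∧
    (∃ e ∈ E, x - e < 0 ∧ O.valuation (x - e) = O.valuation (x - c)) := by
  have hvs : O.valuation (c - d) = O.valuation (x - c) := by
    rw [show c - d = (x - d) - (x - c) by ring, Valuation.map_sub_eq_of_lt_right _ hlt]
  obtain ⟨htE, hvt⟩ : |c - d| ∈ E ∧ O.valuation |c - d| = O.valuation (x - c) := by
    rcases abs_choice (c - d) with h | h <;> rw [h]
    · exact ⟨E.sub_mem hc hd, hvs⟩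
    · exact ⟨E.neg_mem (E.sub_mem hc hd), by rw [Valuation.map_neg, hvs]⟩
  have habs : |x - d| < |c - d| := abs_lt_abs_of_valuation_lt hO (hvs ▸ hlt)
  have hlt' : O.valuation (x - d) < O.valuation |c - d| := hvt ▸ hlt
  refine ⟨⟨d - |c - d|, E.sub_mem hd htE, ?_, ?_⟩, ⟨d + |c - d|, E.add_mem hd htE, ?_, ?_⟩⟩
  · linarith [neg_abs_le (x - d)]
  · rw [show x - (d - |c - d|) = (x - d) + |c - d| by ring,
      Valuation.map_add_eq_of_lt_right _ hlt', hvt]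
  · linarith [le_abs_self (x - d)]
  · rw [show x - (d + |c - d|) = (x - d) - |c - d| by ring,
      Valuation.map_sub_eq_of_lt_right _ hlt', hvt]

end ConvexValuationSubring

/-- Multiplicative convention: the paper's `val a ≥ val b` is
`O.valuation a ≤ O.valuation b`. -/
theorem stmt3_general {U : Type*} [Field U] [LinearOrder U] [IsStrictOrderedRing U] (E : Subfield U)
    (O : ValuationSubring U) (hconv : ∀ a b : U, a ∈ O → |b| ≤ |a| → b ∈ O)
    (x : U)
    (hnomax : ¬ ∃ c ∈ E, ∀ d ∈ E, O.valuation (x - c) ≤ O.valuation (x - d)) :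
    (∀ c ∈ E, ∃ d ∈ E, 0 < x - d ∧ O.valuation (x - d) ≤ O.valuation (x - c)) ∧
    (∀ c ∈ E, ∃ d ∈ E, x - d < 0 ∧ O.valuation (x - d) ≤ O.valuation (x - c)) := by
  push Not at hnomax
  have hO : ∀ b : U, |b| ≤ 1 → b ∈ O := fun b hb => hconv 1 b O.one_mem (by rwa [abs_one])
  refine ⟨fun c hc => ?_, fun c hc => ?_⟩ <;> obtain ⟨d, hd, hlt⟩ := hnomax c hc
  · obtain ⟨e, he, hpos, hv⟩ :=
      (ValuationSubring.exists_mem_sub_pos_and_sub_neg_of_valuation_lt hO hc hd hlt).1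
    exact ⟨e, he, hpos, hv.le⟩
  · obtain ⟨e, he, hneg, hv⟩ :=
      (ValuationSubring.exists_mem_sub_pos_and_sub_neg_of_valuation_lt hO hc hd hlt).2
    exact ⟨e, he, hneg, hv.le⟩

/-- Let `E ⊆ U` be ordered fields, `O` an order-convex valuation
subring of `U`, and `x ∈ U \ E`.  If `val (x - E)` has no maximum, then the values of
the positive differences `x - d > 0` and of the negative differences `x - d < 0` are
both cofinal in `val (x - E)`.  (Multiplicative convention: paper's `val(a) ≥ val(b)`
is `O.valuation a ≤ O.valuation b`, so cofinality of `S` in `val (x - E)` reads: for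
every `c ∈ E` there is `d ∈ S` with `O.valuation (x - d) ≤ O.valuation (x - c)`.) -/
theorem stmt3 {U : Type*} [Field U] [LinearOrder U] [IsStrictOrderedRing U] (E : Subfield U)
    (O : ValuationSubring U) (hconv : ∀ a b : U, a ∈ O → |b| ≤ |a| → b ∈ O)
    (x : U) (hx : x ∉ E)
    (hnomax : ¬ ∃ c ∈ E, ∀ d ∈ E, O.valuation (x - c) ≤ O.valuation (x - d)) :
    (∀ c ∈ E, ∃ d ∈ E, 0 < x - d ∧ O.valuation (x - d) ≤ O.valuation (x - c)) ∧
    (∀ c ∈ E, ∃ d ∈ E, x - d < 0 ∧ O.valuation (x - d) ≤ O.valuation (x - c)) :=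
  stmt3_general E O hconv x hnomax
end

section
/- Let E be an ordered field (more generally a densely ordered abelian group) and p a convex, non-realized, unary partial type over E. Then the breadth Br(p) is a convex subgroup: it is convex and closed under differences, i.e. if y₀ and y₁ both realize Br(p) then so does y₁ − y₀. -/
/-!
A point of `E` cannot realize `p`, so the midpoint `m` of any bounds `a < p < b` from `E` lies
entirely on one side of the convex set `p(U)`; hence `p ⊢ a < x < m` or `p ⊢ m < x < b`, and every
`y ⊨ Br(p)` satisfies `|y| < (b - a) / 2`. Two such bounds add up to `|y₁ - y₀| < b - a`.
Convexity holds because membership in `Br(p)` only depends on `|y|` and is downward closed in it.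
-/

/-- The realization set of the breadth `Br(p)` of a convex unary partial type `p`,
where `P` is the realization set of `p` in an ordered extension `U` of `E`:
`y` realizes `Br(p)` iff `|y| < b - a` for all `a, b ∈ E` with `p ⊢ a < x < b`
(pairs with an infinite endpoint impose no condition). -/
def breadth {U : Type*} [Field U] [LinearOrder U] [IsStrictOrderedRing U] (E : Subfield U) (P : Set U) : Set U :=
  {y : U | ∀ a ∈ E, ∀ b ∈ E, (∀ t ∈ P, a < t ∧ t < b) → |y| < b - a}

theorem Set.OrdConnected.subset_Iio_or_subset_Ioi_of_notMem {α : Type*} [LinearOrder α]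
    {P : Set α} (hP : P.OrdConnected) {m : α} (hm : m ∉ P) : P ⊆ Iio m ∨ P ⊆ Ioi m := by
  by_contra! h
  obtain ⟨s, hs, hms⟩ : ∃ s ∈ P, m ≤ s := by simpa [Set.not_subset] using h.1
  obtain ⟨t, ht, htm⟩ : ∃ t ∈ P, t ≤ m := by simpa [Set.not_subset] using h.2
  exact hm (hP.out ht hs ⟨htm, hms⟩)

section Breadth

variable {U : Type*} [Field U] [LinearOrder U] [IsStrictOrderedRing U] {E : Subfield U}
  {P : Set U}

theorem mem_breadth_of_abs_le {y z : U} (hy : y ∈ breadth E P) (hzy : |z| ≤ |y|) :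
    z ∈ breadth E P :=
  fun a ha b hb hab => hzy.trans_lt (hy a ha b hb hab)

theorem abs_lt_half_of_mem_breadth (hP : P.OrdConnected) (hnr : ∀ e ∈ E, e ∉ P) {y : U}
    (hy : y ∈ breadth E P) {a b : U} (ha : a ∈ E) (hb : b ∈ E)
    (hab : ∀ t ∈ P, a < t ∧ t < b) : |y| < (b - a) / 2 := by
  have hmE : (a + b) / 2 ∈ E := E.div_mem (E.add_mem ha hb) (ofNat_mem E 2)
  rcases hP.subset_Iio_or_subset_Ioi_of_notMem (hnr _ hmE) with hlow | hhigh
  · have := hy a ha _ hmE fun t ht => ⟨(hab t ht).1, hlow ht⟩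
    linarith
  · have := hy _ hmE b hb fun t ht => ⟨hhigh ht, (hab t ht).2⟩
    linarith

theorem sub_mem_breadth (hP : P.OrdConnected) (hnr : ∀ e ∈ E, e ∉ P) {y₀ y₁ : U}
    (h₀ : y₀ ∈ breadth E P) (h₁ : y₁ ∈ breadth E P) : y₁ - y₀ ∈ breadth E P := by
  intro a ha b hb hab
  calc |y₁ - y₀| ≤ |y₁| + |y₀| := abs_sub y₁ y₀
    _ < (b - a) / 2 + (b - a) / 2 :=
      add_lt_add (abs_lt_half_of_mem_breadth hP hnr h₁ ha hb hab)
        (abs_lt_half_of_mem_breadth hP hnr h₀ ha hb hab)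
    _ = b - a := add_halves _

end Breadth

theorem stmt4_general {U : Type*} [Field U] [LinearOrder U] [IsStrictOrderedRing U] (E : Subfield U) (P : Set U)
    (hconv : ∀ a b c : U, a ∈ P → c ∈ P → a ≤ b → b ≤ c → b ∈ P)
    (hnr : ∀ e ∈ E, e ∉ P) :
    (∀ y₀ y₁ y₂ : U, y₀ ∈ breadth E P → y₂ ∈ breadth E P → y₀ ≤ y₁ → y₁ ≤ y₂ →
      y₁ ∈ breadth E P) ∧
    (∀ y₀ y₁ : U, y₀ ∈ breadth E P → y₁ ∈ breadth E P → y₁ - y₀ ∈ breadth E P) := by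
  have hP : P.OrdConnected := ⟨fun s hs t ht r hr => hconv s r t hs ht hr.1 hr.2⟩
  refine ⟨fun y₀ y₁ y₂ h₀ h₂ h₀₁ h₁₂ => ?_, fun y₀ y₁ => sub_mem_breadth hP hnr⟩
  rcases le_max_iff.mp (abs_le_max_abs_abs h₀₁ h₁₂) with h | h
  · exact mem_breadth_of_abs_le h₀ h
  · exact mem_breadth_of_abs_le h₂ h

/-- Let `E` be an ordered field (a densely ordered abelian group),
`p` a convex non-realized unary partial type over `E`, with realization set `P`
(nonempty and order-convex, disjoint from `E`) in an extension `U`.  Then the breadth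
`Br(p)` is a convex subgroup: its realization set is order-convex and closed under
differences. -/
theorem stmt4 {U : Type*} [Field U] [LinearOrder U] [IsStrictOrderedRing U] (E : Subfield U) (P : Set U)
    (hne : P.Nonempty)
    (hconv : ∀ a b c : U, a ∈ P → c ∈ P → a ≤ b → b ≤ c → b ∈ P)
    (hnr : ∀ e ∈ E, e ∉ P) :
    (∀ y₀ y₁ y₂ : U, y₀ ∈ breadth E P → y₂ ∈ breadth E P → y₀ ≤ y₁ → y₁ ≤ y₂ →
      y₁ ∈ breadth E P) ∧
    (∀ y₀ y₁ : U, y₀ ∈ breadth E P → y₁ ∈ breadth E P → y₁ - y₀ ∈ breadth E P) :=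
  stmt4_general E P hconv hnr
end

section
/- Let E be an ordered field, U an elementary extension, O a convex valuation subring of U, and p a weakly (O∩E)-immediate complete unary type over E (i.e. for a realization x, val(x−E) has no maximum). Then the realization set Br(p)(U) of the breadth of p in U is an O-submodule of U, and for any realization x ∈ p(U) one has p(U) = x + Br(p)(U). -/
/-- The realization set in `U` of the breadth `Br(x/E)` of the (convex) type of `x`
over `E`: all `y` with `|y| < b - a` for every `a, b ∈ E` with `a < x < b`. -/
def breadthOf {U : Type*} [Field U] [LinearOrder U] [IsStrictOrderedRing U] (E : Subfield U) (x : U) : Set U :=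
  {y : U | ∀ a ∈ E, ∀ b ∈ E, a < x → x < b → |y| < b - a}

/-- The realization set in `U` of the type of `x` over the (o-minimal) `E`,
i.e. of the cut of `x` over `E`. -/
def typeSet {U : Type*} [Field U] [LinearOrder U] [IsStrictOrderedRing U] (E : Subfield U) (x : U) : Set U :=
  {u : U | ∀ e ∈ E, (e < u ↔ e < x)}

/-!
Because `val (x - E)` has no maximum, for `c ∈ E` we find `d, d' ∈ E` with
`val (x - d') < val (x - d) < val (x - c)`. Then `|x - d'| < |d' - d|`, so `x` lies in the
`E`-interval of radius `|d' - d|` around `d'`, and every `y` in the breadth satisfies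
`|y| < 2 |d' - d|`, whence `val y ≤ val (d' - d) = val (x - d) < val (x - c)`.
Thus the breadth is `{y | val y < val (x - c) for all c ∈ E}`, visibly an `O`-submodule,
and `|y| < |x - c|` for all `c ∈ E` means exactly that `x + y` realizes the cut of `x`.
-/

theorem ValuationSubring.valuation_mul_le_of_mem {K : Type*} [Field K] (O : ValuationSubring K)
    {r : K} (hr : r ∈ O) (y : K) : O.valuation (r * y) ≤ O.valuation y := by
  rw [map_mul]
  exact mul_le_of_le_one_left' ((O.valuation_le_one_iff r).2 hr)

section

variable {U : Type*} [Field U] [LinearOrder U] [IsStrictOrderedRing U]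

namespace ValuationSubring

variable (O : ValuationSubring U) (hconv : ∀ a b : U, a ∈ O → |b| ≤ |a| → b ∈ O)
include hconv

theorem valuation_le_of_abs_le_s5 {a b : U} (h : |a| ≤ |b|) : O.valuation a ≤ O.valuation b := by
  rcases eq_or_ne b 0 with rfl | hb
  · have ha : a = 0 := abs_nonpos_iff.1 (by simpa using h)
    simp [ha]
  have hab : a / b ∈ O := hconv 1 _ O.one_mem <| by
    rw [abs_one, abs_div]
    exact div_le_one_of_le₀ h (abs_nonneg b)
  calc O.valuation a = O.valuation (a / b) * O.valuation b := by
        rw [← map_mul, div_mul_cancel₀ _ hb]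
    _ ≤ O.valuation b := mul_le_of_le_one_left' ((O.valuation_le_one_iff _).2 hab)

theorem abs_lt_abs_of_valuation_lt_s5 {a b : U} (h : O.valuation a < O.valuation b) : |a| < |b| :=
  lt_of_not_ge fun hba => (O.valuation_le_of_abs_le_s5 hconv hba).not_gt h

end ValuationSubring

theorem mem_breadthOf_of_forall_abs_lt (E : Subfield U) {x y : U}
    (hy : ∀ c ∈ E, |y| < |x - c|) : y ∈ breadthOf E x := by
  intro a ha b _ hax hxb
  have := hy a ha
  rw [abs_of_pos (sub_pos.2 hax)] at this
  linarith

theorem add_mem_typeSet_of_forall_abs_lt (E : Subfield U) {x y : U}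
    (hy : ∀ c ∈ E, |y| < |x - c|) : x + y ∈ typeSet E x := by
  intro e he
  have hye := hy e he
  constructor
  · intro hexy
    by_contra! hxe
    rw [abs_of_nonpos (sub_nonpos.2 hxe)] at hye
    linarith [le_abs_self y]
  · intro hex
    rw [abs_of_pos (sub_pos.2 hex)] at hye
    linarith [neg_abs_le y]

theorem sub_mem_breadthOf_of_mem_typeSet (E : Subfield U) {x u : U} (hu : u ∈ typeSet E x) :
    u - x ∈ breadthOf E x := by
  intro a ha b hb hax hxb
  have hau : a < u := (hu a ha).2 hax
  have hub : u ≤ b := not_lt.1 fun hbu => hxb.not_gt ((hu b hb).1 hbu)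
  exact abs_sub_lt_iff.2 ⟨by linarith, by linarith⟩

variable (E : Subfield U) (O : ValuationSubring U)
  (hconv : ∀ a b : U, a ∈ O → |b| ≤ |a| → b ∈ O) {x : U}
  (hwim : ∀ c ∈ E, ∃ d ∈ E, O.valuation (x - d) < O.valuation (x - c))
include hconv hwim

theorem valuation_lt_of_mem_breadthOf {y : U} (hy : y ∈ breadthOf E x) {c : U} (hc : c ∈ E) :
    O.valuation y < O.valuation (x - c) := by
  obtain ⟨d, hd, hdc⟩ := hwim c hc
  obtain ⟨d', hd', hd'd⟩ := hwim d hd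
  have hval : O.valuation (d' - d) = O.valuation (x - d) := by
    rw [show d' - d = (x - d) - (x - d') by ring]
    exact Valuation.map_sub_eq_of_lt_left _ hd'd
  have hρ : |d' - d| ∈ E := abs_mem_iff.2 (sub_mem hd' hd)
  obtain ⟨hlo, hhi⟩ := abs_lt.1 (O.abs_lt_abs_of_valuation_lt_s5 hconv (hval ▸ hd'd))
  have hy' : |y| < |d' - d| + |d' - d| := by
    simpa using hy _ (sub_mem hd' hρ) _ (add_mem hd' hρ) (by linarith) (by linarith)
  calc O.valuation y ≤ O.valuation (2 * (d' - d)) :=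
        O.valuation_le_of_abs_le_s5 hconv (by rw [abs_mul, abs_two]; linarith)
    _ ≤ O.valuation (d' - d) := O.valuation_mul_le_of_mem (ofNat_mem O 2) _
    _ = O.valuation (x - d) := hval
    _ < O.valuation (x - c) := hdc

theorem mem_breadthOf_iff_forall_valuation_lt {y : U} :
    y ∈ breadthOf E x ↔ ∀ c ∈ E, O.valuation y < O.valuation (x - c) :=
  ⟨fun hy _ hc => valuation_lt_of_mem_breadthOf E O hconv hwim hy hc, fun hy =>
    mem_breadthOf_of_forall_abs_lt E fun c hc => O.abs_lt_abs_of_valuation_lt_s5 hconv (hy c hc)⟩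

def breadthSubmodule : Submodule O U where
  carrier := breadthOf E x
  zero_mem' := fun a _ b _ hax hxb => by rw [abs_zero]; linarith
  add_mem' {y z} hy hz := by
    simp only [mem_breadthOf_iff_forall_valuation_lt E O hconv hwim] at hy hz ⊢
    exact fun c hc => Valuation.map_add_lt _ (hy c hc) (hz c hc)
  smul_mem' r y hy := by
    simp only [mem_breadthOf_iff_forall_valuation_lt E O hconv hwim] at hy ⊢
    exact fun c hc => (O.valuation_mul_le_of_mem r.2 y).trans_lt (hy c hc)

end

theorem stmt5_general {U : Type*} [Field U] [LinearOrder U] [IsStrictOrderedRing U] (E : Subfield U)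
    (O : ValuationSubring U) (hconv : ∀ a b : U, a ∈ O → |b| ≤ |a| → b ∈ O)
    (x : U)
    (hwim : ∀ c ∈ E, ∃ d ∈ E, O.valuation (x - d) < O.valuation (x - c)) :
    ((0 : U) ∈ breadthOf E x ∧
      (∀ y z : U, y ∈ breadthOf E x → z ∈ breadthOf E x → y + z ∈ breadthOf E x) ∧
      (∀ y : U, y ∈ breadthOf E x → -y ∈ breadthOf E x) ∧
      (∀ r : U, r ∈ O → ∀ y ∈ breadthOf E x, r * y ∈ breadthOf E x)) ∧
    typeSet E x = {u : U | ∃ y ∈ breadthOf E x, u = x + y} := by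
  let Br := breadthSubmodule E O hconv hwim
  refine ⟨⟨Br.zero_mem, fun _ _ => Br.add_mem, fun _ => Br.neg_mem,
    fun r hr _ => Br.smul_mem ⟨r, hr⟩⟩, Set.ext fun u => ⟨fun hu => ?_, ?_⟩⟩
  · exact ⟨u - x, sub_mem_breadthOf_of_mem_typeSet E hu, by ring⟩
  · rintro ⟨y, hy, rfl⟩
    exact add_mem_typeSet_of_forall_abs_lt E fun c hc =>
      O.abs_lt_abs_of_valuation_lt_s5 hconv (valuation_lt_of_mem_breadthOf E O hconv hwim hy hc)

/-- Let `E ≺ U` be ordered fields, `O` a convex valuation subring of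
`U`, and `p = tp(x/E)` a weakly `(O ∩ E)`-immediate complete unary type over `E`
(i.e. `val (x - E)` has no maximum; multiplicatively: for every `c ∈ E` there is
`d ∈ E` with `O.valuation (x - d) < O.valuation (x - c)`).  Then `Br(p)(U)` is an
`O`-submodule of `U` and `p(U) = x + Br(p)(U)`. -/
theorem stmt5 {U : Type*} [Field U] [LinearOrder U] [IsStrictOrderedRing U] (E : Subfield U)
    (O : ValuationSubring U) (hconv : ∀ a b : U, a ∈ O → |b| ≤ |a| → b ∈ O)
    (x : U) (hx : x ∉ E)
    (hwim : ∀ c ∈ E, ∃ d ∈ E, O.valuation (x - d) < O.valuation (x - c)) :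
    ((0 : U) ∈ breadthOf E x ∧
      (∀ y z : U, y ∈ breadthOf E x → z ∈ breadthOf E x → y + z ∈ breadthOf E x) ∧
      (∀ y : U, y ∈ breadthOf E x → -y ∈ breadthOf E x) ∧
      (∀ r : U, r ∈ O → ∀ y ∈ breadthOf E x, r * y ∈ breadthOf E x)) ∧
    typeSet E x = {u : U | ∃ y ∈ breadthOf E x, u = x + y} :=
  stmt5_general E O hconv x hwim
end

section
/- Let (E,O) ⊨ T_convex, b realizing the special cut O < b < E^{>O}, and f an E-definable differentiable function. If f(b) belongs to the maximal ideal m_b of O_b = {y ∈ E⟨b⟩ : |y| < E^{>O}}, then f'(b) ∈ m_b. If f(b) belongs to the maximal ideal of the convex hull of O in E⟨b⟩, then f'(b) also belongs to that maximal ideal. -/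
open FirstOrder

section Preamble

universe u

variable {M : Type u}

/-- A unary function is definable (via its graph) with parameters from `A`. -/
def DefFun (L : FirstOrder.Language) [L.Structure M] (A : Set M) (f : M → M) : Prop :=
  A.Definable L {p : Fin 2 → M | f (p 0) = p 1}

/-- A unary set is definable with parameters from `A`. -/
def DefSet (L : FirstOrder.Language) [L.Structure M] (A : Set M) (s : Set M) : Prop :=
  A.Definable L {p : Fin 1 → M | p 0 ∈ s}

/-- `c` is in the definable closure of `A`. -/
def InDcl (L : FirstOrder.Language) [L.Structure M] (A : Set M) (c : M) : Prop :=
  DefSet L A {c}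

/-- `A` is closed under definable closure. -/
def DclClosed (L : FirstOrder.Language) [L.Structure M] (A : Set M) : Prop :=
  ∀ c : M, InDcl L A c → c ∈ A

/-- The definable closure of `A`. -/
def Dcl (L : FirstOrder.Language) [L.Structure M] (A : Set M) : Set M :=
  {c : M | InDcl L A c}

/-- The order and field operations of `M` are `∅`-definable in `L`. -/
def FieldCompat (L : FirstOrder.Language) (M : Type u) [L.Structure M]
    [Field M] [LinearOrder M] [IsStrictOrderedRing M] : Prop :=
  (∅ : Set M).Definable L {p : Fin 2 → M | p 0 ≤ p 1} ∧
  (∅ : Set M).Definable L {p : Fin 3 → M | p 0 + p 1 = p 2} ∧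
  (∅ : Set M).Definable L {p : Fin 3 → M | p 0 * p 1 = p 2}

/-- A set is a finite union of points and (possibly unbounded) open intervals. -/
def FinUnionIntervals [LinearOrder M] (s : Set M) : Prop :=
  ∃ t : Finset (Set M),
    (∀ u ∈ t, (∃ a b : M, u = Set.Ioo a b) ∨ (∃ a : M, u = Set.Ioi a) ∨
      (∃ a : M, u = Set.Iio a) ∨ (∃ a : M, u = {a}) ∨ u = Set.univ) ∧
    s = ⋃₀ ↑t

/-- The structure `M` is o-minimal. -/
def IsOMin (L : FirstOrder.Language) (M : Type u) [L.Structure M] [LinearOrder M] : Prop :=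
  ∀ s : Set M, DefSet L Set.univ s → FinUnionIntervals s

/-- An order-convex subring. -/
def ConvexSubring [Field M] [LinearOrder M] [IsStrictOrderedRing M] (O : Subring M) : Prop :=
  ∀ a b : M, a ∈ O → |b| ≤ |a| → b ∈ O

/-- A `T`-convex subring: convex and closed under all `∅`-definable
total continuous unary functions. -/
def TConvexSubring (L : FirstOrder.Language) [L.Structure M] [Field M] [LinearOrder M] [IsStrictOrderedRing M]
    [TopologicalSpace M] [OrderTopology M] (O : Subring M) : Prop :=
  ConvexSubring O ∧
  ∀ f : M → M, DefFun L (∅ : Set M) f → Continuous f → ∀ x ∈ O, f x ∈ O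

/-- The maximal ideal of a (convex) valuation subring, as a set. -/
def mIdealOf [DivisionRing M] (S : Set M) : Set M := {y : M | y ∈ S ∧ (y = 0 ∨ y⁻¹ ∉ S)}

/-- Dominance: `x ≼ y` with respect to `O`. -/
def preceq [DivisionRing M] (O : Set M) (x y : M) : Prop :=
  (x = 0 ∧ y = 0) ∨ (y ≠ 0 ∧ x / y ∈ O)

/-- Strict dominance: `x ≺ y` with respect to `O`. -/
def prec [DivisionRing M] (O : Set M) (x y : M) : Prop :=
  y ≠ 0 ∧ x / y ∈ mIdealOf O

/-- Asymptotic equivalence `x ≍ y`. -/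
def asymp [DivisionRing M] (O : Set M) (x y : M) : Prop :=
  preceq O x y ∧ preceq O y x

/-- `x ∼ y`, i.e. `x - y ≺ x`. -/
def simRel [DivisionRing M] (O : Set M) (x y : M) : Prop :=
  prec O (x - y) x

/-- The convex hull of a set in an ordered field. -/
def CHull [Field M] [LinearOrder M] [IsStrictOrderedRing M] (O : Set M) : Set M := {y : M | ∃ o ∈ O, |y| ≤ o}

/-- `x` is weakly `O`-immediate over `E`: the set `val (x - E)` has no maximum. -/
def WeakIm [DivisionRing M] (O : Set M) (E : Set M) (x : M) : Prop :=
  ∀ c ∈ E, ∃ d ∈ E, prec O (x - d) (x - c)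

/-- Derivative with respect to the order of the field. -/
def HasODerivAt [Field M] [LinearOrder M] [IsStrictOrderedRing M] (f : M → M) (a l : M) : Prop :=
  ∀ ε : M, 0 < ε → ∃ δ : M, 0 < δ ∧
    ∀ t : M, t ≠ a → |t - a| < δ → |(f t - f a) / (t - a) - l| < ε

/-- The cut of `x` over `E`: the set of elements realizing the same cut as `x`. -/
def cutSet [Preorder M] (E : Set M) (x : M) : Set M :=
  {u : M | ∀ e ∈ E, (e < u ↔ e < x)}

/-- The canonical valuation ring `O_b = {y ∈ E⟨b⟩ : |y| < E^{>O}}` on `E⟨b⟩`. -/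
def Oball (L : FirstOrder.Language) [L.Structure M] [Field M] [LinearOrder M] [IsStrictOrderedRing M]
    (E O : Set M) (b : M) : Set M :=
  {y : M | y ∈ Dcl L (E ∪ {b}) ∧ ∀ e ∈ E, (∀ o ∈ O, o < e) → |y| < e}

/-- The convex hull `O_b⁻` of `O` in `E⟨b⟩`. -/
def OballMinus (L : FirstOrder.Language) [L.Structure M] [Field M] [LinearOrder M] [IsStrictOrderedRing M]
    (E O : Set M) (b : M) : Set M :=
  {y : M | y ∈ Dcl L (E ∪ {b}) ∧ ∃ o ∈ O, |y| ≤ o}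

/-- `κ` bounds the cofinality of the weakly immediate type of `x` over `E`. -/
def CofBound [DivisionRing M] (O E : Set M) (x : M) (κ : Cardinal.{u}) : Prop :=
  ∃ D : Set M, D ⊆ E ∧ Cardinal.mk D ≤ κ ∧ ∀ c ∈ E, ∃ d ∈ D, preceq O (x - d) (x - c)

end Preamble

/-!
No element of `E` lies in `[b, 2b]`: one above `O` exceeds `2b`. An `E`-definable set containing
`b` has a finite `E`-definable frontier, which therefore lies in `E` and misses `[b, 2b]`, so the
set contains all of `[b, 2b]`. The derivative of an `E`-definable function is `E`-definable, so
this applies to `{t | |f t| ≤ r}` and `{t | K ≤ f' t}` for `K, r ∈ E`: if `|f b| ≤ r` and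
`K ≤ |f' b|`, the mean value inequality on `[b, 2b]` gives `b K ≤ 4 r`. With `K = r = e⁻¹` for
`e ∈ E` above `O` this forces `b ≤ 4`, and with `K = o⁻¹`, `r = 1` for `o ∈ O` it forces
`b ≤ 4 o`; both contradict `O < b`. The analytic arguments are real induction, which needs only
suprema of definable sets, and o-minimality provides these.
-/

open FirstOrder FirstOrder.Language Set

section Development

variable {L : FirstOrder.Language} {M : Type*} [L.Structure M] {A : Set M} {α : Type*}

namespace Set.Definable

theorem ofPred_exists {P : M → (α → M) → Prop}
    (h : A.Definable L {w : α ⊕ Fin 1 → M | P (w (.inr 0)) fun i => w (.inl i)}) :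
    A.Definable L {v | ∃ y, P y v} := by
  convert h.exists_of_finite using 1
  ext v
  exact ⟨fun ⟨y, hy⟩ => ⟨fun _ => y, hy⟩, fun ⟨u, hu⟩ => ⟨u 0, hu⟩⟩

theorem ofPred_forall {P : M → (α → M) → Prop}
    (h : A.Definable L {w : α ⊕ Fin 1 → M | P (w (.inr 0)) fun i => w (.inl i)}) :
    A.Definable L {v | ∀ y, P y v} := by
  convert h.forall_of_finite using 1
  ext v
  exact ⟨fun hy u => hy (u 0), fun hu y => hu fun _ => y⟩

theorem ofPred_and {P Q : (α → M) → Prop} (hP : A.Definable L {v | P v})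
    (hQ : A.Definable L {v | Q v}) : A.Definable L {v | P v ∧ Q v} :=
  hP.inter hQ

theorem ofPred_not {P : (α → M) → Prop} (hP : A.Definable L {v | P v}) :
    A.Definable L {v | ¬ P v} :=
  hP.compl

theorem ofPred_imp {P Q : (α → M) → Prop} (hP : A.Definable L {v | P v})
    (hQ : A.Definable L {v | Q v}) : A.Definable L {v | P v → Q v} :=
  hP.himp hQ

end Set.Definable

theorem Set.DefinableMap.vecCons₂ {f g : (α → M) → M} (hf : A.DefinableFun L f)
    (hg : A.DefinableFun L g) : A.DefinableMap L fun v => ![f v, g v] := by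
  intro i
  fin_cases i
  exacts [hf, hg]

theorem DefSet.definable_mem {s : Set M} (hs : DefSet L A s) {f : (α → M) → M}
    (hf : A.DefinableFun L f) : A.Definable L {v | f v ∈ s} :=
  hs.preimage_map (F := fun v => ![f v]) fun i => by fin_cases i; exact hf

theorem Set.DefinableFun.comp₁ {g : M → M} (hg : A.DefinableFun L fun p : Fin 1 → M => g (p 0))
    {f : (α → M) → M} (hf : A.DefinableFun L f) : A.DefinableFun L fun v => g (f v) :=
  hg.comp (g := fun v => ![f v]) fun i => by fin_cases i; exact hf

@[fun_prop]
theorem DefFun.comp {g : M → M} (hg : DefFun L A g) {f : (α → M) → M}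
    (hf : A.DefinableFun L f) : A.DefinableFun L fun v => g (f v) := by
  refine DefinableFun.comp₁ ?_ hf
  simpa [DefinableFun, Function.tupleGraph] using hg.preimage_comp ![some 0, none]

theorem InDcl.of_mem {c : M} (hc : c ∈ A) : InDcl L A c :=
  Definable.singleton_of_mem L hc

theorem InDcl.map {c : M} (hc : InDcl L A c) {g : M → M} (hg : DefFun L A g) :
    InDcl L A (g c) := by
  have h : A.Definable L {p : Fin 1 → M | ∃ y, y ∈ ({c} : Set M) ∧ g y = p 0} := by
    refine .ofPred_exists (.ofPred_and ?_ ?_)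
    · exact hc.definable_mem (DefinableFun.proj L)
    · exact DefinableFun.ofPred_eq (by fun_prop (disch := assumption)) (by fun_prop)
  unfold InDcl DefSet
  convert h using 1
  ext p
  simp [eq_comm]

section OrderedField

variable [Field M] [LinearOrder M] [IsStrictOrderedRing M] {f g : (α → M) → M}

theorem FieldCompat.definableFun_add (hc : FieldCompat L M) :
    (∅ : Set M).DefinableFun L fun p : Fin 2 → M => p 0 + p 1 := by
  simpa [DefinableFun, Function.tupleGraph] using hc.2.1.preimage_comp ![some 0, some 1, none]

theorem FieldCompat.definableFun_mul (hc : FieldCompat L M) :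
    (∅ : Set M).DefinableFun L fun p : Fin 2 → M => p 0 * p 1 := by
  simpa [DefinableFun, Function.tupleGraph] using hc.2.2.preimage_comp ![some 0, some 1, none]

theorem FieldCompat.definable_le (hc : FieldCompat L M) (hf : A.DefinableFun L f)
    (hg : A.DefinableFun L g) : A.Definable L {v | f v ≤ g v} :=
  (hc.1.mono (empty_subset A)).preimage_map (DefinableMap.vecCons₂ hf hg)

theorem FieldCompat.definable_lt (hc : FieldCompat L M) (hf : A.DefinableFun L f)
    (hg : A.DefinableFun L g) : A.Definable L {v | f v < g v} := by
  convert (hc.definable_le hg hf).compl using 1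
  ext v
  simp

namespace Set.DefinableFun

@[fun_prop]
theorem add (hc : FieldCompat L M) (hf : A.DefinableFun L f) (hg : A.DefinableFun L g) :
    A.DefinableFun L fun v => f v + g v :=
  hc.definableFun_add.of_empty.comp (DefinableMap.vecCons₂ hf hg)

@[fun_prop]
theorem mul (hc : FieldCompat L M) (hf : A.DefinableFun L f) (hg : A.DefinableFun L g) :
    A.DefinableFun L fun v => f v * g v :=
  hc.definableFun_mul.of_empty.comp (DefinableMap.vecCons₂ hf hg)

/-- `0` is the only solution of `x + x = x`. -/
@[fun_prop]
theorem zero (hc : FieldCompat L M) : A.DefinableFun L fun _ : α → M => (0 : M) := by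
  have h := ofPred_eq (A := A) (L := L)
    (add hc (proj L (i := (none : Option α))) (proj L (i := none))) (proj L (i := none))
  unfold DefinableFun
  convert h using 1
  ext v
  simp [Function.tupleGraph, eq_comm]

/-- `1` is the only nonzero solution of `x * x = x`. -/
@[fun_prop]
theorem one (hc : FieldCompat L M) : A.DefinableFun L fun _ : α → M => (1 : M) := by
  have h := (ofPred_eq (A := A) (L := L)
    (mul hc (proj L (i := (none : Option α))) (proj L (i := none))) (proj L (i := none))).inter
    (ofPred_eq (proj L (i := none)) (zero hc)).compl
  unfold DefinableFun
  convert h using 1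
  ext v
  simp only [Function.tupleGraph, mem_ofPred_eq, mem_inter_iff, mem_compl_iff]
  constructor
  · rintro h; simp [← h]
  · rintro ⟨h1, h2⟩; exact (mul_left_cancel₀ h2 (h1.trans (mul_one _).symm)).symm

@[fun_prop]
theorem neg (hc : FieldCompat L M) (hf : A.DefinableFun L f) :
    A.DefinableFun L fun v => -f v := by
  refine comp₁ ?_ hf
  have h := ofPred_eq (A := A)
    (add hc (proj L (i := (some 0 : Option (Fin 1)))) (proj L (i := none))) (zero hc)
  unfold DefinableFun
  convert h using 1
  ext v
  simp [Function.tupleGraph, neg_eq_iff_add_eq_zero]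

@[fun_prop]
theorem sub (hc : FieldCompat L M) (hf : A.DefinableFun L f) (hg : A.DefinableFun L g) :
    A.DefinableFun L fun v => f v - g v := by
  simpa only [sub_eq_add_neg] using add hc hf (neg hc hg)

/-- The graph of `x ↦ x⁻¹` is `(x = 0 ∧ y = 0) ∨ x * y = 1`, as `0⁻¹ = 0`. -/
@[fun_prop]
theorem inv (hc : FieldCompat L M) (hf : A.DefinableFun L f) :
    A.DefinableFun L fun v => (f v)⁻¹ := by
  refine comp₁ ?_ hf
  have h := ((ofPred_eq (A := A) (proj L (i := (some 0 : Option (Fin 1)))) (zero hc)).inter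
    (ofPred_eq (proj L (i := none)) (zero hc))).union
    (ofPred_eq (mul hc (proj L (i := (some 0 : Option (Fin 1)))) (proj L (i := none))) (one hc))
  unfold DefinableFun
  convert h using 1
  ext v
  simp only [Function.tupleGraph, mem_ofPred_eq, mem_inter_iff, mem_union, Function.comp_apply]
  rcases eq_or_ne (v (some 0)) 0 with h0 | h0
  · simp [h0, eq_comm]
  · simp [h0, mul_eq_one_iff_inv_eq₀ h0]

@[fun_prop]
theorem div (hc : FieldCompat L M) (hf : A.DefinableFun L f) (hg : A.DefinableFun L g) :
    A.DefinableFun L fun v => f v / g v := by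
  simpa only [div_eq_mul_inv] using mul hc hf (inv hc hg)

@[fun_prop]
theorem abs (hc : FieldCompat L M) (hf : A.DefinableFun L f) :
    A.DefinableFun L fun v => |f v| := by
  have h := DefinableFun.ite (hc.definable_le (zero hc) hf) hf (neg hc hf)
  convert h using 2 with v
  split_ifs with h0
  · exact abs_of_nonneg h0
  · exact abs_of_neg (not_le.mp h0)

end Set.DefinableFun

theorem InDcl.inv (hc : FieldCompat L M) {y : M} (hy : InDcl L A y) : InDcl L A y⁻¹ :=
  hy.map (g := fun x => x⁻¹)
    (DefinableFun.ofPred_eq (by fun_prop (disch := assumption)) (by fun_prop))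

end OrderedField

section OrderDerivative

variable [Field M] [LinearOrder M] [IsStrictOrderedRing M] {f : M → M} {a l : M}

theorem HasODerivAt.unique {l' : M} (h : HasODerivAt f a l) (h' : HasODerivAt f a l') :
    l = l' := by
  by_contra hne
  have hε : 0 < |l - l'| / 2 := by have := sub_ne_zero.mpr hne; positivity
  obtain ⟨δ, hδ, hq⟩ := h _ hε
  obtain ⟨δ', hδ', hq'⟩ := h' _ hε
  set t := a + min δ δ' / 2
  have hmin : 0 < min δ δ' := lt_min hδ hδ'
  have hta : |t - a| = min δ δ' / 2 := by simp [t, abs_of_pos (half_pos hmin)]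
  have ht : t ≠ a := fun h => by simp [h] at hta; linarith
  have h1 := hq t ht (by rw [hta]; linarith [min_le_left δ δ'])
  have h2 := hq' t ht (by rw [hta]; linarith [min_le_right δ δ'])
  have := abs_sub_le l ((f t - f a) / (t - a)) l'
  rw [abs_sub_comm] at h1
  linarith

theorem HasODerivAt.neg (h : HasODerivAt f a l) : HasODerivAt (fun t => -f t) a (-l) := by
  intro ε hε
  obtain ⟨δ, hδ, hq⟩ := h ε hε
  refine ⟨δ, hδ, fun t ht hta => ?_⟩
  have e : (-f t - -f a) / (t - a) - -l = -((f t - f a) / (t - a) - l) := by ring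
  simpa only [e, abs_neg] using hq t ht hta

theorem HasODerivAt.sub_mul (h : HasODerivAt f a l) (c : M) :
    HasODerivAt (fun t => f t - c * t) a (l - c) := by
  intro ε hε
  obtain ⟨δ, hδ, hq⟩ := h ε hε
  refine ⟨δ, hδ, fun t ht hta => ?_⟩
  have e : (f t - c * t - (f a - c * a)) / (t - a) - (l - c) = (f t - f a) / (t - a) - l := by
    field_simp [sub_ne_zero.mpr ht]
    ring
  simpa only [e] using hq t ht hta

theorem HasODerivAt.exists_abs_sub_le (h : HasODerivAt f a l) :
    ∃ δ > 0, ∀ t, |t - a| < δ → |f t - f a| ≤ (|l| + 1) * |t - a| := by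
  obtain ⟨δ, hδ, hq⟩ := h 1 one_pos
  refine ⟨δ, hδ, fun t hta => ?_⟩
  rcases eq_or_ne t a with rfl | ht
  · simp
  have hslope : |(f t - f a) / (t - a)| ≤ |l| + 1 := by
    have := abs_sub_abs_le_abs_sub ((f t - f a) / (t - a)) l
    linarith [hq t ht hta]
  calc |f t - f a| = |(f t - f a) / (t - a)| * |t - a| := by
        rw [← abs_mul, div_mul_cancel₀ _ (sub_ne_zero.mpr ht)]
    _ ≤ (|l| + 1) * |t - a| := by gcongr

theorem HasODerivAt.le_of_forall_Ico (h : HasODerivAt f a l) {u c : M} (hu : u < a)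
    (hc : ∀ r ∈ Ico u a, c ≤ f r) : c ≤ f a := by
  by_contra! hlt
  obtain ⟨δ, hδ, hlip⟩ := h.exists_abs_sub_le
  set η := min (min δ (a - u)) ((c - f a) / (|l| + 1))
  have hη : 0 < η := lt_min (lt_min hδ (sub_pos.mpr hu)) (by have := sub_pos.mpr hlt; positivity)
  have hηδ : η ≤ δ := (min_le_left _ _).trans (min_le_left _ _)
  have hηu : η ≤ a - u := (min_le_left _ _).trans (min_le_right _ _)
  have hηc : η * (|l| + 1) ≤ c - f a := (le_div_iff₀ (by positivity)).mp (min_le_right _ _)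
  have hdist : |a - η / 2 - a| = η / 2 := by simp [abs_of_pos (half_pos hη)]
  have hbound := hlip (a - η / 2) (by rw [hdist]; linarith)
  rw [hdist] at hbound
  have hr := hc (a - η / 2) ⟨by linarith, by linarith⟩
  nlinarith [le_abs_self (f (a - η / 2) - f a), abs_nonneg l]

theorem HasODerivAt.exists_forall_Ioo_lt (h : HasODerivAt f a l) (hl : 0 < l) :
    ∃ a' > a, ∀ r ∈ Ioo a a', f a < f r := by
  obtain ⟨δ, hδ, hq⟩ := h l hl
  refine ⟨a + δ, by linarith, fun r ⟨har, hra⟩ => ?_⟩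
  have hpos : 0 < r - a := sub_pos.mpr har
  have hslope := (abs_lt.mp (hq r har.ne' (by rw [abs_of_pos hpos]; linarith))).1
  have : 0 < (f r - f a) / (r - a) := by linarith
  linarith [(div_pos_iff_of_pos_right hpos).mp this]

theorem DefFun.deriv (hc : FieldCompat L M) (hf : DefFun L A f) {f' : M → M}
    (hder : ∀ t, HasODerivAt f t (f' t)) : DefFun L A f' := by
  have h : A.Definable L {p : Fin 2 → M | HasODerivAt f (p 0) (p 1)} := by
    refine .ofPred_forall (.ofPred_imp ?_ (.ofPred_exists (.ofPred_and ?_ (.ofPred_forall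
      (.ofPred_imp ?_ (.ofPred_imp ?_ ?_))))))
    · exact hc.definable_lt (by fun_prop (disch := assumption)) (by fun_prop)
    · exact hc.definable_lt (by fun_prop (disch := assumption)) (by fun_prop)
    · exact (DefinableFun.ofPred_eq (by fun_prop) (by fun_prop)).ofPred_not
    · exact hc.definable_lt (by fun_prop (disch := assumption)) (by fun_prop)
    · exact hc.definable_lt (by fun_prop (disch := assumption)) (by fun_prop)
  unfold DefFun
  convert h using 1
  ext p
  show f' (p 0) = p 1 ↔ HasODerivAt f (p 0) (p 1)
  exact ⟨fun hp => hp ▸ hder (p 0), (hder (p 0)).unique⟩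

end OrderDerivative

section OMinimal

variable [Field M] [LinearOrder M] [IsStrictOrderedRing M]

theorem FinUnionIntervals.exists_isLUB {X : Set M} (h : FinUnionIntervals X) (hne : X.Nonempty)
    (hbdd : BddAbove X) : ∃ w, IsLUB X w := by
  classical
  obtain ⟨t, ht, rfl⟩ := h
  induction t using Finset.induction_on with
  | empty => simp at hne
  | insert u t _ ih =>
    rw [Finset.coe_insert, sUnion_insert] at hne hbdd ⊢
    have ih' := fun hne => ih (fun u hu => ht u (Finset.mem_insert_of_mem hu)) hne
      (hbdd.mono subset_union_right)
    rcases u.eq_empty_or_nonempty with rfl | hu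
    · simpa using ih' (by simpa using hne)
    obtain ⟨a, ha⟩ : ∃ a, IsLUB u a := by
      have hbu := hbdd.mono subset_union_left
      rcases ht u (Finset.mem_insert_self u t) with
        ⟨c, d, rfl⟩ | ⟨c, rfl⟩ | ⟨c, rfl⟩ | ⟨c, rfl⟩ | rfl
      · exact ⟨d, isLUB_Ioo (nonempty_Ioo.mp hu)⟩
      · exact absurd hbu (not_bddAbove_Ioi c)
      · exact ⟨c, isLUB_Iio⟩
      · exact ⟨c, isLUB_singleton⟩
      · exact absurd hbu not_bddAbove_univ
    rcases (⋃₀ (t : Set (Set M))).eq_empty_or_nonempty with ht' | ht'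
    · exact ⟨a, by simpa [ht'] using ha⟩
    · obtain ⟨c, hc⟩ := ih' ht'
      exact ⟨a ⊔ c, ha.union hc⟩

/-- Real induction for definable sets; definable completeness replaces completeness. -/
theorem IsOMin.Icc_subset_of_forall_exists_gt (hO : IsOMin L M) (hc : FieldCompat L M)
    {Q : Set M} (hQ : DefSet L univ Q) {u v : M}
    (hstep : ∀ w ∈ Icc u v, Ico u w ⊆ Q → w ∈ Q ∧ (w < v → ∃ w' > w, Ioo w w' ⊆ Q)) :
    Icc u v ⊆ Q := by
  rcases lt_or_ge v u with hvu | huv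
  · simp [Icc_eq_empty_of_lt hvu]
  set S := {s | u ≤ s ∧ s ≤ v ∧ ∀ r, u ≤ r → r ≤ s → r ∈ Q}
  have hS : DefSet L univ S := by
    show (univ : Set M).Definable L
      {p : Fin 1 → M | u ≤ p 0 ∧ p 0 ≤ v ∧ ∀ r, u ≤ r → r ≤ p 0 → r ∈ Q}
    refine .ofPred_and ?_ (.ofPred_and ?_ (.ofPred_forall (.ofPred_imp ?_ (.ofPred_imp ?_ ?_))))
    · exact hc.definable_le (by fun_prop (disch := simp)) (by fun_prop)
    · exact hc.definable_le (by fun_prop) (by fun_prop (disch := simp))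
    · exact hc.definable_le (by fun_prop (disch := simp)) (by fun_prop)
    · exact hc.definable_le (by fun_prop) (by fun_prop)
    · exact hQ.definable_mem (by fun_prop)
  have huS : u ∈ S := ⟨le_rfl, huv, fun r h1 h2 =>
    le_antisymm h2 h1 ▸ (hstep u ⟨le_rfl, huv⟩ (by simp)).1⟩
  obtain ⟨w, hw⟩ := (hO S hS).exists_isLUB ⟨u, huS⟩ ⟨v, fun s hs => hs.2.1⟩
  have huw : u ≤ w := hw.1 huS
  have hwv : w ≤ v := hw.2 fun s hs => hs.2.1
  have hIco : Ico u w ⊆ Q := fun r ⟨hur, hrw⟩ => by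
    obtain ⟨s, hs, hrs⟩ := (lt_isLUB_iff hw).mp hrw
    exact hs.2.2 r hur hrs.le
  obtain ⟨hwQ, hext⟩ := hstep w ⟨huw, hwv⟩ hIco
  have hIcc : ∀ r, u ≤ r → r ≤ w → r ∈ Q := fun r hur hrw =>
    hrw.lt_or_eq.elim (fun h => hIco ⟨hur, h⟩) (· ▸ hwQ)
  rcases hwv.lt_or_eq with hlt | rfl
  · obtain ⟨w', hww', hsub⟩ := hext hlt
    have hs : min ((w + w') / 2) v ∈ S := by
      refine ⟨huw.trans (le_min (by linarith) hwv), min_le_right _ _,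
        fun r hur hrs => (le_or_gt r w).elim (hIcc r hur) fun hwr => hsub ⟨hwr, ?_⟩⟩
      linarith [hrs.trans (min_le_left _ _)]
    exact absurd (hw.1 hs) (not_le.mpr (lt_min (by linarith) hlt))
  · exact fun r hr => hIcc r hr.1 hr.2

theorem IsOMin.le_of_hasODerivAt_pos (hO : IsOMin L M) (hc : FieldCompat L M) {φ φ' : M → M}
    (hφ : DefFun L univ φ) {u v : M} (hder : ∀ s ∈ Icc u v, HasODerivAt φ s (φ' s))
    (hpos : ∀ s ∈ Icc u v, 0 < φ' s) (huv : u ≤ v) : φ u ≤ φ v := by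
  have hQ : DefSet L univ {s | φ u ≤ φ s} :=
    hc.definable_le (by fun_prop (disch := simp)) (by fun_prop (disch := assumption))
  refine hO.Icc_subset_of_forall_exists_gt hc hQ (fun w hw hIco => ?_) ⟨huv, le_rfl⟩
  have hwQ : φ u ≤ φ w := by
    rcases hw.1.lt_or_eq with huw | rfl
    · exact (hder w hw).le_of_forall_Ico huw hIco
    · exact le_rfl
  obtain ⟨w', hww', hgt⟩ := (hder w hw).exists_forall_Ioo_lt (hpos w hw)
  exact ⟨hwQ, fun _ => ⟨w', hww', fun r hr => hwQ.trans (hgt r hr).le⟩⟩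

end OMinimal

theorem frontier_sUnion_subset_of_finite {X : Type*} [TopologicalSpace X] {t : Set (Set X)}
    (ht : t.Finite) : frontier (⋃₀ t) ⊆ ⋃ u ∈ t, frontier u := by
  rintro w ⟨hcl, hint⟩
  rw [ht.closure_sUnion, mem_iUnion₂] at hcl
  obtain ⟨u, hu, hwu⟩ := hcl
  exact mem_biUnion hu ⟨hwu, fun h => hint (interior_mono (subset_sUnion_of_mem hu) h)⟩

section Frontier

variable [Field M] [LinearOrder M] [IsStrictOrderedRing M] [TopologicalSpace M] [OrderTopology M]

theorem mem_frontier_iff_abs_sub_lt {X : Set M} {w : M} :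
    w ∈ frontier X ↔
      ∀ δ, 0 < δ → (∃ y, y ∈ X ∧ |y - w| < δ) ∧ ∃ z, z ∉ X ∧ |z - w| < δ := by
  simp only [frontier_eq_closure_inter_closure, mem_inter_iff,
    mem_closure_iff_nhds_basis (nhds_basis_abs_sub_lt w), mem_ofPred_eq, mem_compl_iff]
  exact ⟨fun h δ hδ => ⟨h.1 δ hδ, h.2 δ hδ⟩,
    fun h => ⟨fun δ hδ => (h δ hδ).1, fun δ hδ => (h δ hδ).2⟩⟩

theorem DefSet.frontier (hc : FieldCompat L M) {X : Set M} (hX : DefSet L A X) :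
    DefSet L A (_root_.frontier X) := by
  show A.Definable L {p : Fin 1 → M | p 0 ∈ _root_.frontier X}
  simp_rw [mem_frontier_iff_abs_sub_lt]
  refine .ofPred_forall (.ofPred_imp ?_ (.ofPred_and (.ofPred_exists (.ofPred_and ?_ ?_))
    (.ofPred_exists (.ofPred_and (.ofPred_not ?_) ?_))))
  · exact hc.definable_lt (by fun_prop (disch := assumption)) (by fun_prop)
  · exact hX.definable_mem (by fun_prop)
  · exact hc.definable_lt (by fun_prop (disch := assumption)) (by fun_prop)
  · exact hX.definable_mem (by fun_prop)
  · exact hc.definable_lt (by fun_prop (disch := assumption)) (by fun_prop)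

theorem FinUnionIntervals.finite_frontier {X : Set M} (h : FinUnionIntervals X) :
    (frontier X).Finite := by
  obtain ⟨t, ht, rfl⟩ := h
  refine ((t.finite_toSet.biUnion fun u hu => ?_).subset
    (frontier_sUnion_subset_of_finite t.finite_toSet))
  rcases ht u hu with ⟨a, b, rfl⟩ | ⟨a, rfl⟩ | ⟨a, rfl⟩ | ⟨a, rfl⟩ | rfl
  · rcases lt_or_ge a b with hab | hba
    · simp [frontier_Ioo hab]
    · simp [Ioo_eq_empty hba.not_gt]
  · simp
  · simp
  · exact (finite_singleton a).subset (frontier_subset_closure.trans closure_singleton.subset)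
  · simp

end Frontier

section DefinableClosure

variable [Field M] [LinearOrder M] [IsStrictOrderedRing M]

/-- The minimum of a finite `A`-definable set is `A`-definable; induct on the cardinality. -/
theorem DclClosed.subset_of_finite (hc : FieldCompat L M) (hA : DclClosed L A) {s : Set M}
    (hs : s.Finite) (hdef : DefSet L A s) : s ⊆ A := by
  induction hn : s.ncard generalizing s with
  | zero => simp [(ncard_eq_zero hs).mp hn]
  | succ n ih =>
    obtain ⟨m, hm, hmin⟩ := s.exists_min_image id hs (nonempty_of_ncard_ne_zero (by omega))
    have hmA : m ∈ A := by
      refine hA m ?_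
      have h : A.Definable L {p : Fin 1 → M | p 0 ∈ s ∧ ∀ y, y ∈ s → p 0 ≤ y} :=
        .ofPred_and (hdef.definable_mem (by fun_prop))
          (.ofPred_forall (.ofPred_imp (hdef.definable_mem (by fun_prop))
            (hc.definable_le (by fun_prop) (by fun_prop))))
      unfold InDcl DefSet
      convert h using 1
      ext p
      simp only [mem_singleton_iff, mem_ofPred_eq]
      exact ⟨fun hp => hp ▸ ⟨hm, hmin⟩, fun hp => le_antisymm (hp.2 m hm) (hmin _ hp.1)⟩
    have hrest : s \ {m} ⊆ A :=
      ih hs.sdiff (hdef.inter (InDcl.of_mem hmA).compl)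
        (by rw [ncard_sdiff_singleton_of_mem hm]; omega)
    intro x hx
    rcases eq_or_ne x m with rfl | hxm
    · exact hmA
    · exact hrest ⟨hx, hxm⟩

variable [TopologicalSpace M] [OrderTopology M]

/-- The frontier of `X` is finite and `A`-definable, hence lies in `A` and misses `[u, v]`. -/
theorem IsOMin.Icc_subset_of_forall_notMem (hO : IsOMin L M) (hc : FieldCompat L M)
    (hA : DclClosed L A) {X : Set M} (hX : DefSet L A X) {u v : M} (hu : u ∈ X)
    (hdisj : ∀ e ∈ A, e ∉ Icc u v) : Icc u v ⊆ X := by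
  have hXu : DefSet L univ X := Definable.mono hX (subset_univ A)
  have hF : frontier X ⊆ A := hA.subset_of_finite hc (hO X hXu).finite_frontier (hX.frontier hc)
  refine hO.Icc_subset_of_forall_exists_gt hc hXu fun w hw hIco => ?_
  have hwF : w ∉ frontier X := fun h => hdisj w (hF h) hw
  have hwX : w ∈ X := by
    rcases hw.1.lt_or_eq with huw | rfl
    · by_contra hwX
      have hcl : w ∈ closure X := closure_mono hIco (by simp [closure_Ico huw.ne, huw.le])
      exact hwF ⟨hcl, fun h => hwX (interior_subset h)⟩
    · exact hu
  have hint : w ∈ interior X := by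
    by_contra h
    exact hwF ⟨subset_closure hwX, h⟩
  obtain ⟨w', hww', hsub⟩ :=
    exists_Ico_subset_of_mem_nhds (isOpen_interior.mem_nhds hint) ⟨w + 1, by linarith⟩
  exact ⟨hwX, fun _ => ⟨w', hww', Ioo_subset_Ico_self.trans (hsub.trans interior_subset)⟩⟩

end DefinableClosure

section GrowthBound

variable [Field M] [LinearOrder M] [IsStrictOrderedRing M] [TopologicalSpace M] [OrderTopology M]
  {f f' : M → M} {b K r : M}

/-- On `[b, 2b]` the function stays `r`-small while its slope stays `≥ K`, so `K b / 2 ≤ 2 r`. -/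
theorem IsOMin.mul_le_of_le_deriv (hO : IsOMin L M) (hc : FieldCompat L M) (hA : DclClosed L A)
    (hf : DefFun L A f) (hder : ∀ t, HasODerivAt f t (f' t)) (hb : 0 < b)
    (hdisj : ∀ e ∈ A, e ∉ Icc b (2 * b)) (hK : K ∈ A) (hK0 : 0 < K) (hr : r ∈ A)
    (hfb : |f b| ≤ r) (hKf' : K ≤ f' b) : b * K ≤ 4 * r := by
  have hf' := hf.deriv hc hder
  have hsmall : Icc b (2 * b) ⊆ {t | |f t| ≤ r} :=
    hO.Icc_subset_of_forall_notMem hc hA (X := {t | |f t| ≤ r})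
      (hc.definable_le (by fun_prop (disch := assumption)) (by fun_prop (disch := assumption)))
      hfb hdisj
  have hsteep : Icc b (2 * b) ⊆ {t | K ≤ f' t} :=
    hO.Icc_subset_of_forall_notMem hc hA (X := {t | K ≤ f' t})
      (hc.definable_le (by fun_prop (disch := assumption)) (by fun_prop (disch := assumption)))
      hKf' hdisj
  have hφ : DefFun L univ fun t => f t - K / 2 * t := by
    have hfu : DefFun L univ f := Definable.mono hf (subset_univ A)
    exact DefinableFun.ofPred_eq (by fun_prop (disch := first | assumption | simp)) (by fun_prop)
  have hmono := hO.le_of_hasODerivAt_pos hc hφ (fun s _ => (hder s).sub_mul (K / 2))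
    (fun s hs => show 0 < f' s - K / 2 by have : K ≤ f' s := hsteep hs; linarith)
    (by linarith : b ≤ 2 * b)
  have h1 : |f b| ≤ r := hsmall ⟨le_rfl, by linarith⟩
  have h2 : |f (2 * b)| ≤ r := hsmall ⟨by linarith, le_rfl⟩
  nlinarith [abs_le.mp h1, abs_le.mp h2]

theorem IsOMin.mul_le_of_le_abs_deriv (hO : IsOMin L M) (hc : FieldCompat L M)
    (hA : DclClosed L A) (hf : DefFun L A f) (hder : ∀ t, HasODerivAt f t (f' t)) (hb : 0 < b)
    (hdisj : ∀ e ∈ A, e ∉ Icc b (2 * b)) (hK : K ∈ A) (hK0 : 0 < K) (hr : r ∈ A)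
    (hfb : |f b| ≤ r) (hKf' : K ≤ |f' b|) : b * K ≤ 4 * r := by
  rcases le_abs'.mp hKf' with hneg | hpos
  · have hnf : DefFun L A fun t => -f t :=
      DefinableFun.ofPred_eq (by fun_prop (disch := assumption)) (by fun_prop)
    exact hO.mul_le_of_le_deriv hc hA hnf (fun t => (hder t).neg) hb hdisj hK hK0 hr
      (by rwa [abs_neg]) (by linarith)
  · exact hO.mul_le_of_le_deriv hc hA hf hder hb hdisj hK hK0 hr hfb hpos

end GrowthBound

theorem exists_forall_lt_of_convex [Field M] [LinearOrder M] {E : Subfield M} {O : Subring M}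
    (hconv : ∀ a b : M, a ∈ O → b ∈ E → |b| ≤ |a| → b ∈ O) (hnt : ∃ e ∈ E, e ∉ O) :
    ∃ e ∈ E, ∀ o ∈ O, o < e := by
  obtain ⟨e, he, heO⟩ := hnt
  refine ⟨|e|, ?_, fun o ho =>
    lt_of_not_ge fun h => heO (hconv o e ho he (h.trans (le_abs_self o)))⟩
  rcases abs_choice e with h | h <;> rw [h]
  exacts [he, E.neg_mem he]

section Cut

variable [Field M] [LinearOrder M] [IsStrictOrderedRing M]

theorem two_mul_lt_of_forall_lt {E : Subfield M} {O : Subring M} {b : M}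
    (hb : ∀ e ∈ E, (∀ o ∈ O, o < e) → b < e) {e : M} (he : e ∈ E) (heO : ∀ o ∈ O, o < e) :
    2 * b < e := by
  have h := hb (e / 2) (E.div_mem he (ofNat_mem E 2)) fun o ho => by
    linarith [heO (2 * o) (O.mul_mem (ofNat_mem O 2) ho)]
  linarith

theorem mem_mIdealOf_Oball_iff (hc : FieldCompat L M) {E : Set M} {O : Subring M} {b : M}
    (hE : ∃ e ∈ E, ∀ o ∈ O, o < e) {y : M} :
    y ∈ mIdealOf (Oball L E O b) ↔
      y ∈ Dcl L (E ∪ {b}) ∧ ∃ e ∈ E, (∀ o ∈ O, o < e) ∧ |y| ≤ e⁻¹ := by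
  have hone : ∀ e : M, (∀ o ∈ O, o < e) → 1 < e := fun e he => he 1 O.one_mem
  constructor
  · rintro ⟨⟨hy, -⟩, hy0 | hyinv⟩
    · obtain ⟨e, he, heO⟩ := hE
      exact ⟨hy, e, he, heO, by simp [hy0, (zero_lt_one.trans (hone e heO)).le]⟩
    · have hex : ¬ ∀ e ∈ E, (∀ o ∈ O, o < e) → |y⁻¹| < e := fun h => hyinv ⟨InDcl.inv hc hy, h⟩
      push Not at hex
      obtain ⟨e, he, heO, hle⟩ := hex
      have he0 : 0 < e := zero_lt_one.trans (hone e heO)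
      rw [abs_inv] at hle
      exact ⟨hy, e, he, heO, (le_inv_comm₀ he0 (inv_pos.mp (he0.trans_le hle))).mp hle⟩
  · rintro ⟨hy, e, he, heO, hle⟩
    have he1 := hone e heO
    refine ⟨⟨hy, fun e' _ he' => (hle.trans_lt (inv_lt_one_of_one_lt₀ he1)).trans (hone e' he')⟩,
      or_iff_not_imp_left.mpr fun hy0 hinv => ?_⟩
    have h := hinv.2 e he heO
    rw [abs_inv] at h
    exact hle.not_gt ((inv_lt_comm₀ (abs_pos.mpr hy0) (zero_lt_one.trans he1)).mp h)

theorem mem_mIdealOf_OballMinus_iff (hc : FieldCompat L M) {E : Set M} {O : Subring M} {b y : M} :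
    y ∈ mIdealOf (OballMinus L E O b) ↔ y ∈ Dcl L (E ∪ {b}) ∧ ∀ o ∈ O, 0 < o → |y| < o⁻¹ := by
  constructor
  · rintro ⟨⟨hy, -⟩, hy0 | hyinv⟩
    · exact ⟨hy, fun o _ ho => by simpa [hy0] using ho⟩
    · have hlt : ∀ o ∈ O, o < |y|⁻¹ := fun o ho => by
        rw [← abs_inv]
        exact lt_of_not_ge fun h => hyinv ⟨InDcl.inv hc hy, o, ho, h⟩
      have hy0 : 0 < |y| := inv_pos.mp (hlt 0 O.zero_mem)
      exact ⟨hy, fun o ho ho0 => (lt_inv_comm₀ ho0 hy0).mp (hlt o ho)⟩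
  · rintro ⟨hy, hlt⟩
    refine ⟨⟨hy, 1, O.one_mem, by simpa using (hlt 1 O.one_mem one_pos).le⟩,
      or_iff_not_imp_left.mpr fun hy0 ⟨_, o, ho, hle⟩ => ?_⟩
    rw [abs_inv] at hle
    have hy0' : 0 < |y| := abs_pos.mpr hy0
    have ho0 : 0 < o := (inv_pos.mpr hy0').trans_le hle
    exact hle.not_gt ((lt_inv_comm₀ ho0 hy0').mpr (hlt o ho ho0))

end Cut

end Development

theorem stmt9_general {L : FirstOrder.Language} {U : Type*} [L.Structure U]
    [Field U] [LinearOrder U] [IsStrictOrderedRing U] [TopologicalSpace U] [OrderTopology U]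
    (hOmin : IsOMin L U) (hcompat : FieldCompat L U)
    (E : Subfield U) (hEd : DclClosed L (E : Set U))
    (O : Subring U) (hOE : (O : Set U) ⊆ (E : Set U))
    (hconv : ∀ a b : U, a ∈ O → b ∈ E → |b| ≤ |a| → b ∈ O)
    (hnt : ∃ e ∈ E, e ∉ O)
    (b : U) (hb1 : ∀ o ∈ O, o < b) (hb2 : ∀ e ∈ E, (∀ o ∈ O, o < (e : U)) → b < e)
    (f f' : U → U) (hf : DefFun L (E : Set U) f)
    (hder : ∀ t : U, HasODerivAt f t (f' t)) :
    (f b ∈ mIdealOf (Oball L (E : Set U) (O : Set U) b) →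
      f' b ∈ mIdealOf (Oball L (E : Set U) (O : Set U) b)) ∧
    (f b ∈ mIdealOf (OballMinus L (E : Set U) (O : Set U) b) →
      f' b ∈ mIdealOf (OballMinus L (E : Set U) (O : Set U) b)) := by
  have hE := exists_forall_lt_of_convex hconv hnt
  have hb0 : 0 < b := hb1 0 O.zero_mem
  have hdisj : ∀ e ∈ (E : Set U), e ∉ Icc b (2 * b) := fun e he ⟨hbe, he2⟩ =>
    (two_mul_lt_of_forall_lt hb2 he fun o ho => (hb1 o ho).trans_le hbe).not_ge he2
  have hbound {K r : U} :=
    hOmin.mul_le_of_le_abs_deriv (K := K) (r := r) hcompat hEd hf hder hb0 hdisj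
  have hf'b : f' b ∈ Dcl L ((E : Set U) ∪ {b}) :=
    (InDcl.of_mem (mem_union_right _ (mem_singleton b))).map
      (Definable.mono (hf.deriv hcompat hder) subset_union_left)
  constructor
  · rw [mem_mIdealOf_Oball_iff hcompat hE, mem_mIdealOf_Oball_iff hcompat hE]
    rintro ⟨-, e, he, heO, hfb⟩
    refine ⟨hf'b, e, he, heO, le_of_not_gt fun hlt => ?_⟩
    have he0 : 0 < e⁻¹ := inv_pos.mpr (zero_lt_one.trans (heO 1 O.one_mem))
    have h := hbound (E.inv_mem he) he0 (E.inv_mem he) hfb hlt.le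
    exact (hb1 4 (ofNat_mem O 4)).not_ge (le_of_mul_le_mul_right h he0)
  · rw [mem_mIdealOf_OballMinus_iff hcompat, mem_mIdealOf_OballMinus_iff hcompat]
    rintro ⟨-, hfb⟩
    refine ⟨hf'b, fun o ho ho0 => lt_of_not_ge fun hle => ?_⟩
    have h := hbound (E.inv_mem (hOE ho)) (inv_pos.mpr ho0) E.one_mem
      (by simpa using (hfb 1 O.one_mem one_pos).le) hle
    rw [mul_one, ← div_eq_mul_inv, div_le_iff₀ ho0] at h
    exact (hb1 (4 * o) (O.mul_mem (ofNat_mem O 4) ho)).not_ge h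

/-- Let `(E, O) ⊨ T_convex`, `b` realizing the special cut
`O < b < E^{>O}`, and `f` an `E`-definable differentiable function (with derivative
`f'`).  If `f b` lies in the maximal ideal `m_b` of `O_b = {y ∈ E⟨b⟩ : |y| < E^{>O}}`
then `f' b ∈ m_b`; if `f b` lies in the maximal ideal of the convex hull `O_b⁻` of `O`
in `E⟨b⟩`, then so does `f' b`. -/
theorem stmt9 {L : FirstOrder.Language} {U : Type*} [L.Structure U]
    [Field U] [LinearOrder U] [IsStrictOrderedRing U] [TopologicalSpace U] [OrderTopology U]
    (hOmin : IsOMin L U) (hcompat : FieldCompat L U)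
    (E : Subfield U) (hEd : DclClosed L (E : Set U))
    (O : Subring U) (hOE : (O : Set U) ⊆ (E : Set U))
    (hconv : ∀ a b : U, a ∈ O → b ∈ E → |b| ≤ |a| → b ∈ O)
    (hTc : ∀ f : U → U, DefFun L (∅ : Set U) f → Continuous f → ∀ t ∈ O, f t ∈ O)
    (hnt : ∃ e ∈ E, e ∉ O)
    (b : U) (hb1 : ∀ o ∈ O, o < b) (hb2 : ∀ e ∈ E, (∀ o ∈ O, o < (e : U)) → b < e)
    (f f' : U → U) (hf : DefFun L (E : Set U) f)
    (hder : ∀ t : U, HasODerivAt f t (f' t)) :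
    (f b ∈ mIdealOf (Oball L (E : Set U) (O : Set U) b) →
      f' b ∈ mIdealOf (Oball L (E : Set U) (O : Set U) b)) ∧
    (f b ∈ mIdealOf (OballMinus L (E : Set U) (O : Set U) b) →
      f' b ∈ mIdealOf (OballMinus L (E : Set U) (O : Set U) b)) :=
  stmt9_general hOmin hcompat E hEd O hOE hconv hnt b hb1 hb2 f f' hf hder
end

section
/- Let (U,O') ⊨ T_convex, E ≼ E₁ ≺ U with E ⊄ O', x ∈ U \ E, and suppose tp(x/E) is not realized in E₁. Then x is weakly immediate over (E, O'∩E) if and only if x is weakly immediate over (E₁, O'∩E₁); and in that case the two types have equal cofinality (the least length of a pseudo-Cauchy sequence converging to x). -/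
open FirstOrder

/-!
Since `tp(x/E)` is not realized in `E₁`, every `c₁ ∈ E₁ \ E` is separated from `x` by some
`e ∈ E`, so `|x - e| ≤ |x - c₁|` and hence `x - e ≼ x - c₁`. Thus `val (x - E)` is cofinal in
`val (x - E₁)`, and the two sets have a maximum, and a cofinal subset of a given size,
simultaneously.
-/

section Dominance

variable {K : Type*} [Field K] {O : Subring K} {a b c : K}

theorem mul_mem_mIdealOf {y z : K} (hy : y ∈ mIdealOf (O : Set K)) (hz : z ∈ O) :
    y * z ∈ mIdealOf (O : Set K) := by
  refine ⟨O.mul_mem hy.1 hz, or_iff_not_imp_left.2 fun hyz hinv => ?_⟩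
  obtain ⟨hy0, hz0⟩ := mul_ne_zero_iff.1 hyz
  have hy_inv : y⁻¹ = z * (y * z)⁻¹ := by field_simp
  exact hy.2.resolve_left hy0 (hy_inv ▸ O.mul_mem hz hinv)

theorem zero_mem_mIdealOf : (0 : K) ∈ mIdealOf (O : Set K) :=
  ⟨O.zero_mem, Or.inl rfl⟩

theorem preceq.trans (hab : preceq (O : Set K) a b) (hbc : preceq (O : Set K) b c) :
    preceq (O : Set K) a c := by
  rcases hab with ⟨rfl, rfl⟩ | ⟨hb, hab⟩
  · exact hbc
  rcases hbc with ⟨rfl, -⟩ | ⟨hc, hbc⟩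
  · exact absurd rfl hb
  exact Or.inr ⟨hc, div_mul_div_cancel₀ hb ▸ O.mul_mem hab hbc⟩

theorem prec.trans_preceq (hab : prec (O : Set K) a b) (hbc : preceq (O : Set K) b c) :
    prec (O : Set K) a c := by
  obtain ⟨hb, hab⟩ := hab
  rcases hbc with ⟨rfl, -⟩ | ⟨hc, hbc⟩
  · exact absurd rfl hb
  exact ⟨hc, div_mul_div_cancel₀ hb ▸ mul_mem_mIdealOf hab hbc⟩

theorem preceq.trans_prec (hab : preceq (O : Set K) a b) (hbc : prec (O : Set K) b c) :
    prec (O : Set K) a c := by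
  obtain ⟨hc, hbc⟩ := hbc
  rcases hab with ⟨rfl, -⟩ | ⟨hb, hab⟩
  · exact ⟨hc, (zero_div c).symm ▸ zero_mem_mIdealOf⟩
  refine ⟨hc, div_mul_div_cancel₀ hb ▸ ?_⟩
  exact mul_comm (b / c) (a / b) ▸ mul_mem_mIdealOf hbc hab

end Dominance

theorem preceq_of_abs_le {K : Type*} [Field K] [LinearOrder K] [IsStrictOrderedRing K]
    {O : Subring K} (hO : ConvexSubring O) {a b : K} (hb : b ≠ 0) (h : |a| ≤ |b|) :
    preceq (O : Set K) a b := by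
  refine Or.inr ⟨hb, hO 1 (a / b) O.one_mem ?_⟩
  rwa [abs_div, abs_one, div_le_one (abs_pos.mpr hb)]

theorem exists_abs_sub_le_of_notMem_cutSet {α : Type*} [AddCommGroup α] [LinearOrder α]
    [IsOrderedAddMonoid α] {E E₁ : Set α} {x : α} (hnr : ∀ y ∈ E₁ \ E, y ∉ cutSet E x) :
    ∀ c₁ ∈ E₁, ∃ e ∈ E, |x - e| ≤ |x - c₁| := by
  intro c₁ hc₁
  by_cases hc : c₁ ∈ E
  · exact ⟨c₁, hc, le_rfl⟩
  obtain ⟨e, he, hsep⟩ : ∃ e ∈ E, ¬(e < c₁ ↔ e < x) := by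
    simpa [cutSet] using hnr c₁ ⟨hc₁, hc⟩
  refine ⟨e, he, Set.abs_sub_right_of_mem_uIcc (Set.mem_uIcc.2 ?_)⟩
  by_cases hec : e < c₁
  · exact Or.inr ⟨not_lt.1 fun hex => hsep (iff_of_true hec hex), hec.le⟩
  · exact Or.inl ⟨not_lt.1 hec, (not_not.1 fun hex => hsep (iff_of_false hec hex)).le⟩

theorem exists_preceq_sub_of_notMem_cutSet {K : Type*} [Field K] [LinearOrder K]
    [IsStrictOrderedRing K] {O : Subring K} (hO : ConvexSubring O) {E E₁ : Set K} {x : K}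
    (hx : x ∉ E₁) (hnr : ∀ y ∈ E₁ \ E, y ∉ cutSet E x) :
    ∀ c₁ ∈ E₁, ∃ e ∈ E, preceq (O : Set K) (x - e) (x - c₁) := by
  intro c₁ hc₁
  obtain ⟨e, he, hle⟩ := exists_abs_sub_le_of_notMem_cutSet hnr c₁ hc₁
  exact ⟨e, he, preceq_of_abs_le hO (sub_ne_zero.2 (ne_of_mem_of_not_mem hc₁ hx).symm) hle⟩

section Approximation

universe v

variable {K : Type v} [Field K] {O : Subring K} {E E₁ : Set K} {x : K}

theorem weakIm_iff_of_forall_exists_preceq (hsub : E ⊆ E₁)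
    (happrox : ∀ c₁ ∈ E₁, ∃ e ∈ E, preceq (O : Set K) (x - e) (x - c₁)) :
    WeakIm (O : Set K) E x ↔ WeakIm (O : Set K) E₁ x := by
  constructor
  · intro hW c₁ hc₁
    obtain ⟨e, he, hec₁⟩ := happrox c₁ hc₁
    obtain ⟨d, hd, hde⟩ := hW e he
    exact ⟨d, hsub hd, hde.trans_preceq hec₁⟩
  · intro hW c hc
    obtain ⟨d₁, hd₁, hd₁c⟩ := hW c (hsub hc)
    obtain ⟨e, he, hed₁⟩ := happrox d₁ hd₁
    exact ⟨e, he, hed₁.trans_prec hd₁c⟩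

theorem cofBound_iff_of_forall_exists_preceq (hsub : E ⊆ E₁)
    (happrox : ∀ c₁ ∈ E₁, ∃ e ∈ E, preceq (O : Set K) (x - e) (x - c₁))
    (κ : Cardinal.{v}) :
    CofBound (O : Set K) E x κ ↔ CofBound (O : Set K) E₁ x κ := by
  constructor
  · rintro ⟨D, hDE, hcard, hD⟩
    refine ⟨D, hDE.trans hsub, hcard, fun c₁ hc₁ => ?_⟩
    obtain ⟨e, he, hec₁⟩ := happrox c₁ hc₁
    obtain ⟨d, hd, hde⟩ := hD e he
    exact ⟨d, hd, hde.trans hec₁⟩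
  · rintro ⟨D, hDE₁, hcard, hD⟩
    choose! f hfE hf using happrox
    refine ⟨f '' D, Set.image_subset_iff.2 fun d hd => hfE d (hDE₁ hd),
      Cardinal.mk_image_le.trans hcard, fun c hc => ?_⟩
    obtain ⟨d, hd, hdc⟩ := hD c (hsub hc)
    exact ⟨f d, Set.mem_image_of_mem f hd, (hf d (hDE₁ hd)).trans hdc⟩

end Approximation

theorem stmt15_general {L : FirstOrder.Language} {U : Type u} [L.Structure U]
    [Field U] [LinearOrder U] [IsStrictOrderedRing U] [TopologicalSpace U] [OrderTopology U]
    (O' : Subring U) (hT : TConvexSubring L O')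
    (E E₁ : Subfield U) (hEE₁ : E ≤ E₁)
    (x : U) (hx : x ∉ E)
    (hnr : ¬ ∃ y : U, y ∈ E₁ ∧ y ∉ E ∧ ∀ e ∈ E, ((e : U) < y ↔ (e : U) < x)) :
    (WeakIm (O' : Set U) (E : Set U) x ↔ WeakIm (O' : Set U) (E₁ : Set U) x) ∧
    (WeakIm (O' : Set U) (E : Set U) x →
      ∀ κ : Cardinal.{u}, CofBound (O' : Set U) (E : Set U) x κ ↔
        CofBound (O' : Set U) (E₁ : Set U) x κ) := by
  have hx₁ : x ∉ E₁ := fun h => hnr ⟨x, h, hx, fun _ _ => Iff.rfl⟩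
  have happrox := exists_preceq_sub_of_notMem_cutSet hT.1 hx₁
    fun y hy hcut => hnr ⟨y, hy.1, hy.2, hcut⟩
  exact ⟨weakIm_iff_of_forall_exists_preceq hEE₁ happrox,
    fun _ κ => cofBound_iff_of_forall_exists_preceq hEE₁ happrox κ⟩

/-- Let `(U, O') ⊨ T_convex`, `E ≼ E₁ ≺ U` with `E ⊄ O'`,
`x ∈ U \ E`, and suppose `tp(x/E)` is not realized in `E₁` (no `y ∈ E₁ \ E` has the
same cut over `E` as `x`).  Then `x` is weakly immediate over `(E, O' ∩ E)` iff it is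
weakly immediate over `(E₁, O' ∩ E₁)`; and in that case the two types have the same
cofinality (expressed by: for every cardinal `κ`, `κ` bounds the cofinality of the one
type iff it bounds that of the other). -/
theorem stmt15 {L : FirstOrder.Language} {U : Type u} [L.Structure U]
    [Field U] [LinearOrder U] [IsStrictOrderedRing U] [TopologicalSpace U] [OrderTopology U]
    (hOmin : IsOMin L U) (hcompat : FieldCompat L U)
    (O' : Subring U) (hT : TConvexSubring L O') (hnt : ∃ m : U, m ∉ O')
    (E E₁ : Subfield U) (hEE₁ : E ≤ E₁)
    (hEd : DclClosed L (E : Set U)) (hE₁d : DclClosed L (E₁ : Set U))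
    (hEO : ∃ e ∈ E, (e : U) ∉ O')
    (x : U) (hx : x ∉ E)
    (hnr : ¬ ∃ y : U, y ∈ E₁ ∧ y ∉ E ∧ ∀ e ∈ E, ((e : U) < y ↔ (e : U) < x)) :
    (WeakIm (O' : Set U) (E : Set U) x ↔ WeakIm (O' : Set U) (E₁ : Set U) x) ∧
    (WeakIm (O' : Set U) (E : Set U) x →
      ∀ κ : Cardinal.{u}, CofBound (O' : Set U) (E : Set U) x κ ↔
        CofBound (O' : Set U) (E₁ : Set U) x κ) :=
  stmt15_general O' hT E E₁ hEE₁ x hx hnr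
end
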